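/- arXiv:1806.10563 — 8 statements merged into one kernel-verified Lean document; each statement's English description precedes it below -/
import Mathlib

section
/- The ρ-semilinear endomorphism L = ψ^{-1} ∘ ι ∘ ⋀²φ of ⋀²V satisfies L ∘ L = vol(H,d) · id_{⋀²V}; in particular L squares to multiplication by the scalar vol(H,d) ∈ F^×. -/
/-!
Choose an `H`-orthogonal basis `e` of `V`; it exists because `ρ ≠ id` forces some `H v v ≠ 0`.
The wedges `e_s = e_i ∧ e_j`, `s = {i, j}`, form a basis of `⋀²V` that is orthogonal for `h₂`, and
`e_s ∧ e_t = 0` unless `t` is the complement `s'` of `s`. As the wedge pairing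
`⋀²V × ⋀²V → ⋀⁴V` is nondegenerate, `L e_s = (h₂(e_s, e_s) / κ_s) • e_{s'}` with
`κ_s = d(e_{s'} ∧ e_s)`. Two-vectors commute, so `κ_{s'} = κ_s` and
`L (L e_s) = h₂(e_s, e_s) h₂(e_{s'}, e_{s'}) / (ρ(κ_s) κ_s) • e_s`; this scalar is `vol(H, d)`
because `d⁻¹ 1 = κ_s⁻¹ • (e_{s'} ∧ e_s)`. Being `ρ`-invariant and nonzero, it lies in `F^×`.
-/

/-- The canonical generator `v₁ ∧ ⋯ ∧ vₙ` of the `n`-th exterior power, as an element of the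
submodule `⋀[E]^n V` of the exterior algebra. -/
noncomputable def wedgeι (E : Type*) [CommRing E] {V : Type*} [AddCommGroup V] [Module E V]
    (n : ℕ) (v : Fin n → V) : ⋀[E]^n V :=
  ⟨ExteriorAlgebra.ιMulti E n v, ExteriorAlgebra.ιMulti_range E n (Set.mem_range_self v)⟩

/-- The wedge (exterior) product `⋀²V × ⋀²V → ⋀⁴V`. -/
noncomputable def wedgeMul (E : Type*) [CommRing E] {V : Type*} [AddCommGroup V] [Module E V]
    (x y : ⋀[E]^2 V) : ⋀[E]^4 V :=
  ⟨(x : ExteriorAlgebra E V) * (y : ExteriorAlgebra E V), by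
    have h := Submodule.mul_mem_mul x.2 y.2
    have e : (⋀[E]^2 V) * (⋀[E]^2 V) = ⋀[E]^4 V := by
      show LinearMap.range (ExteriorAlgebra.ι E (M := V)) ^ 2 *
          LinearMap.range (ExteriorAlgebra.ι E (M := V)) ^ 2
        = LinearMap.range (ExteriorAlgebra.ι E (M := V)) ^ 4
      rw [← pow_add]
    exact e ▸ h⟩

/-- `h` is a form on `⋀^r V`, additive in each variable, `ρ`-sesquilinear, conjugate-symmetric,
whose value on decomposable wedges is the determinant `det (H (v i) (w j))`. -/
def IsDetForm {E : Type*} [Field E] (ρ : E →+* E)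
    {V : Type*} [AddCommGroup V] [Module E V] (H : V → V → E) (r : ℕ)
    (h : (⋀[E]^r V) → (⋀[E]^r V) → E) : Prop :=
  (∀ x y z, h (x + y) z = h x z + h y z) ∧
  (∀ x y z, h x (y + z) = h x y + h x z) ∧
  (∀ (a b : E) (x y : ⋀[E]^r V), h (a • x) (b • y) = ρ a * h x y * b) ∧
  (∀ x y, h x y = ρ (h y x)) ∧
  (∀ v w : Fin r → V,
    h (wedgeι E r v) (wedgeι E r w) = (Matrix.of fun i j => H (v i) (w j)).det)

open Module ExteriorAlgebra Set.powersetCard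

section Hermitian

variable {E : Type*} [Field E] {V : Type*} [AddCommGroup V] [Module E V]

structure IsHermitianForm (ρ : E →+* E) (H : V → V → E) : Prop where
  add_left : ∀ x y z, H (x + y) z = H x z + H y z
  add_right : ∀ x y z, H x (y + z) = H x y + H x z
  smul : ∀ (a b : E) (x y : V), H (a • x) (b • y) = ρ a * H x y * b
  conj : ∀ x y, H x y = ρ (H y x)

namespace IsHermitianForm

variable {ρ : E →+* E} {H : V → V → E}

lemma smul_right (hH : IsHermitianForm ρ H) (b : E) (x y : V) : H x (b • y) = H x y * b := by
  simpa using hH.smul 1 b x y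

def rightₗ (hH : IsHermitianForm ρ H) (x : V) : V →ₗ[E] E where
  toFun := H x
  map_add' := hH.add_right x
  map_smul' b y := by rw [hH.smul_right, smul_eq_mul, mul_comm, RingHom.id_apply]

lemma restrict (hH : IsHermitianForm ρ H) (W : Submodule E V) :
    IsHermitianForm ρ (fun x y : W => H x y) :=
  ⟨fun x y z => hH.add_left x y z, fun x y z => hH.add_right x y z,
    fun a b x y => hH.smul a b x y, fun x y => hH.conj x y⟩

/-- If `H v v = 0` for all `v`, every value `c = H x y` satisfies `ρ c = -c` by polarization;
applied to `H x (α • y) = c * α` this gives `c * (α - ρ α) = 0`. -/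
lemma exists_self_ne_zero (hH : IsHermitianForm ρ H) (hρ : ρ ≠ RingHom.id E)
    (hnd : ∀ x, (∀ y, H x y = 0) → x = 0) [Nontrivial V] : ∃ v, H v v ≠ 0 := by
  by_contra! hiso
  obtain ⟨α, hα⟩ : ∃ α, ρ α ≠ α := by simpa [DFunLike.ext_iff] using hρ
  have htrace : ∀ x y, H x y + ρ (H x y) = 0 := fun x y => by
    have := hiso (x + y)
    rw [hH.add_left, hH.add_right, hH.add_right, hiso x, hiso y, hH.conj y x] at this
    linear_combination this
  have hzero : ∀ x y, H x y = 0 := fun x y => by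
    have h := htrace x (α • y)
    rw [hH.smul_right, map_mul] at h
    have : H x y * (α - ρ α) = 0 := by linear_combination h - ρ α * htrace x y
    exact (mul_eq_zero.1 this).resolve_right (sub_ne_zero.2 hα.symm)
  obtain ⟨x, hx⟩ := exists_ne (0 : V)
  exact hx (hnd x (hzero x))

lemma sub_smul_mem_ker_rightₗ (hH : IsHermitianForm ρ H) {v : V} (hv : H v v ≠ 0) (z : V) :
    z - (H v z / H v v) • v ∈ LinearMap.ker (hH.rightₗ v) := by
  change H v (z - (H v z / H v v) • v) = 0
  rw [sub_eq_add_neg, ← neg_smul, hH.add_right, hH.smul_right]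
  field_simp
  ring

lemma finrank_ker_rightₗ_add_one [FiniteDimensional E V] (hH : IsHermitianForm ρ H) {v : V}
    (hv : H v v ≠ 0) : finrank E (LinearMap.ker (hH.rightₗ v)) + 1 = finrank E V := by
  have hsurj : LinearMap.range (hH.rightₗ v) = ⊤ :=
    LinearMap.range_eq_top.2 fun c => ⟨(c / H v v) • v, by
      change H v _ = c
      rw [hH.smul_right]
      field_simp⟩
  rw [← (hH.rightₗ v).finrank_range_add_finrank_ker, hsurj, finrank_top, finrank_self, add_comm]

lemma nondegenerate_restrict_ker_rightₗ (hH : IsHermitianForm ρ H)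
    (hnd : ∀ x, (∀ y, H x y = 0) → x = 0) {v : V} (hv : H v v ≠ 0)
    (x : LinearMap.ker (hH.rightₗ v)) (hx : ∀ y : LinearMap.ker (hH.rightₗ v), H x y = 0) :
    x = 0 := by
  have hxv : H x v = 0 := by rw [hH.conj, show H v x = 0 from x.2, map_zero]
  refine Subtype.ext (hnd x fun z => ?_)
  have : H x (z - (H v z / H v v) • v) = 0 := hx ⟨_, hH.sub_smul_mem_ker_rightₗ hv z⟩
  rw [sub_eq_add_neg, ← neg_smul, hH.add_right, hH.smul_right, hxv] at this
  simpa using this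

theorem exists_orthogonal_basis (hH : IsHermitianForm ρ H) (hρ : ρ ≠ RingHom.id E)
    (hnd : ∀ x, (∀ y, H x y = 0) → x = 0) [FiniteDimensional E V] {n : ℕ}
    (hn : finrank E V = n) :
    ∃ e : Basis (Fin n) E V, (∀ i j, i ≠ j → H (e i) (e j) = 0) ∧ ∀ i, H (e i) (e i) ≠ 0 := by
  induction n generalizing V with
  | zero =>
    have : Subsingleton V := finrank_zero_iff.1 hn
    exact ⟨Basis.empty V, fun i => i.elim0, fun i => i.elim0⟩
  | succ n ih =>
    have : Nontrivial V := Module.nontrivial_of_finrank_pos (R := E) (by omega)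
    obtain ⟨v, hv⟩ := hH.exists_self_ne_zero hρ hnd
    obtain ⟨b, hb_ortho, hb_ne⟩ := ih (hH.restrict _)
      (hH.nondegenerate_restrict_ker_rightₗ hnd hv)
      (by have := hH.finrank_ker_rightₗ_add_one hv; omega)
    have hli : ∀ c : E, ∀ x ∈ LinearMap.ker (hH.rightₗ v), c • v + x = 0 → c = 0 :=
      fun c x hx hcx => by
        have := congrArg (H v) hcx
        rw [hH.add_right, hH.smul_right, show H v x = 0 from hx, add_zero,
          show H v 0 = 0 from (hH.rightₗ v).map_zero] at this
        exact (mul_eq_zero.1 this).resolve_left hv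
    have hsp : ∀ z : V, ∃ c : E, z + c • v ∈ LinearMap.ker (hH.rightₗ v) := fun z =>
      ⟨-(H v z / H v v), by
        simpa only [sub_eq_add_neg, neg_smul] using hH.sub_smul_mem_ker_rightₗ hv z⟩
    refine ⟨Basis.mkFinCons v b hli hsp, ?_, ?_⟩
    · intro i j hij
      rw [Basis.coe_mkFinCons]
      cases i using Fin.cases <;> cases j using Fin.cases
      · exact absurd rfl hij
      · exact (b _).2
      · simp [hH.conj _ v, show H v (b _) = 0 from (b _).2]
      · exact hb_ortho _ _ fun h => hij (congrArg _ h)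
    · intro i
      rw [Basis.coe_mkFinCons]
      cases i using Fin.cases
      · exact hv
      · exact hb_ne _

end IsHermitianForm

end Hermitian

section ExteriorPower

lemma Set.powersetCard.not_disjoint_compl_of_ne {I : Type*} [LinearOrder I] [Fintype I]
    {m n : ℕ} (hmn : n + m = Fintype.card I) {s t : Set.powersetCard I m} (h : s ≠ t) :
    ¬Disjoint (compl hmn s).val t.val := by
  rw [coe_compl, disjoint_compl_left_iff]
  exact fun hts => h (Subtype.ext (Finset.eq_of_subset_of_card_le hts (by simp [card_eq])).symm)

lemma Fin.comp_append {α β : Type*} {m n : ℕ} (e : α → β) (f : Fin m → α) (g : Fin n → α) :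
    e ∘ Fin.append f g = Fin.append (e ∘ f) (e ∘ g) := by
  funext i
  refine Fin.addCases (fun j => ?_) (fun j => ?_) i <;>
    simp only [Fin.append_left, Fin.append_right, Function.comp_apply]

variable {R M : Type*} [CommRing R] [AddCommGroup M] [Module R M]

lemma ExteriorAlgebra.ι_commute_ι_mul_ι (x y z : M) : Commute (ι R x) (ι R y * ι R z) := by
  have hswap : ∀ a b : M, ι R a * ι R b = -(ι R b * ι R a) := fun a b =>
    eq_neg_of_add_eq_zero_left (ι_add_mul_swap a b)
  rw [Commute, SemiconjBy, ← mul_assoc, hswap x y, neg_mul, mul_assoc, hswap x z, mul_neg,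
    neg_neg, mul_assoc]

lemma ExteriorAlgebra.ιMulti_two_mul_comm (v w : Fin 2 → M) :
    ιMulti R 2 v * ιMulti R 2 w = ιMulti R 2 w * ιMulti R 2 v := by
  simp only [ιMulti_succ_apply, ιMulti_zero_apply, mul_one, Matrix.vecTail]
  exact ((ι_commute_ι_mul_ι _ _ _).mul_left (ι_commute_ι_mul_ι _ _ _)).symm

/-- Expanding `x` in the basis `b.exteriorPower m`, only the coordinate at `s` survives
multiplication by the basis vector indexed by the complement of `s`. -/
lemma exteriorPower.eq_zero_of_forall_mul_basis_eq_zero {I : Type*} [LinearOrder I] [Fintype I]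
    {m n : ℕ} (b : Basis I R M) (hmn : n + m = Fintype.card I) (x : ⋀[R]^m M)
    (hx : ∀ t : Set.powersetCard I n, (x : ExteriorAlgebra R M) * b.exteriorPower n t = 0) :
    x = 0 := by
  rw [(b.exteriorPower m).ext_elem_iff]
  intro s
  have hdisj : Disjoint s.val (compl hmn s).val := disjoint_compl_right
  have hmul : (x : ExteriorAlgebra R M) * b.exteriorPower n (compl hmn s) =
      ((b.exteriorPower m).repr x s • (permOfDisjoint hdisj).sign •
        b.exteriorPower (m + n) (disjUnion hdisj) : ⋀[R]^(m + n) M) := by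
    conv_lhs => rw [← (b.exteriorPower m).sum_repr x]
    rw [Submodule.coe_sum, Finset.sum_mul, Finset.sum_eq_single s]
    · simp [exteriorPower.basis_apply, ιMulti_family_mul_of_disjoint R b _ _ hdisj]
    · intro s' _ hs'
      rw [Submodule.coe_smul, smul_mul_assoc, exteriorPower.basis_apply,
        exteriorPower.basis_apply, exteriorPower.ιMulti_family_apply_coe,
        exteriorPower.ιMulti_family_apply_coe, ιMulti_family_mul_of_not_disjoint R b _ _
          fun h => not_disjoint_compl_of_ne hmn hs'.symm h.symm, smul_zero]
    · simp
  have := hx (compl hmn s)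
  rw [hmul, ZeroMemClass.coe_eq_zero, smul_comm, smul_eq_zero_iff_eq] at this
  simpa using congrArg (fun y => (b.exteriorPower (m + n)).repr y (disjUnion hdisj)) this

lemma Module.Basis.exteriorPower_apply_eq_wedgeι {I : Type*} [LinearOrder I] {r : ℕ}
    (e : Basis I R M) (s : Set.powersetCard I r) :
    e.exteriorPower r s = wedgeι R r (e ∘ ofFinEmbEquiv.symm s) := by
  rw [exteriorPower.basis_apply]
  rfl

noncomputable def wedgeMulₗ : ⋀[R]^2 M →ₗ[R] ⋀[R]^2 M →ₗ[R] ⋀[R]^4 M :=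
  LinearMap.mk₂ R (wedgeMul R) (fun _ _ _ => Subtype.ext (add_mul _ _ _))
    (fun _ _ _ => Subtype.ext (smul_mul_assoc _ _ _)) (fun _ _ _ => Subtype.ext (mul_add _ _ _))
    (fun _ _ _ => Subtype.ext (mul_smul_comm _ _ _))

lemma wedgeMulₗ_apply (x y : ⋀[R]^2 M) : wedgeMulₗ x y = wedgeMul R x y := rfl

lemma wedgeMul_wedgeι (v w : Fin 2 → M) :
    wedgeMul R (wedgeι R 2 v) (wedgeι R 2 w) = wedgeι R 4 (Fin.append v w) :=
  Subtype.ext (ιMulti_mul_ιMulti v w)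

lemma wedgeMul_wedgeι_comm (v w : Fin 2 → M) :
    wedgeMul R (wedgeι R 2 v) (wedgeι R 2 w) = wedgeMul R (wedgeι R 2 w) (wedgeι R 2 v) :=
  Subtype.ext (ιMulti_two_mul_comm v w)

lemma injective_of_wedgeι_ne_zero {n : ℕ} {v : Fin n → M} (hv : wedgeι R n v ≠ 0) :
    Function.Injective v := by
  by_contra h
  exact hv ((exteriorPower.ιMulti R n).map_eq_zero_of_not_injective v h)

end ExteriorPower

section Gram

variable {E V I : Type*} [CommRing E] {H : V → V → E} {e : I → V} {r : ℕ}

lemma det_gram_comp_of_injective (ho : ∀ i j, i ≠ j → H (e i) (e j) = 0) {f : Fin r → I}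
    (hf : Function.Injective f) :
    (Matrix.of fun i j => H (e (f i)) (e (f j))).det = ∏ i, H (e (f i)) (e (f i)) := by
  rw [← Matrix.det_diagonal]
  congr 1
  ext i j
  by_cases hij : i = j
  · simp [hij]
  · simp [Matrix.diagonal_apply_ne _ hij, ho _ _ (hf.ne hij)]

lemma det_gram_eq_zero_of_notMem_range (ho : ∀ i j, i ≠ j → H (e i) (e j) = 0)
    {f g : Fin r → I} {k : Fin r} (hk : f k ∉ Set.range g) :
    (Matrix.of fun i j => H (e (f i)) (e (g j))).det = 0 :=
  Matrix.det_eq_zero_of_row_eq_zero k fun j => ho _ _ fun h => hk ⟨j, h.symm⟩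

end Gram

namespace IsDetForm

variable {E : Type*} [Field E] {V : Type*} [AddCommGroup V] [Module E V] {I : Type*}
  {ρ : E →+* E} {H : V → V → E} {r : ℕ} {h : ⋀[E]^r V → ⋀[E]^r V → E}

lemma apply_wedgeι_comp_self (hh : IsDetForm ρ H r h) {e : I → V}
    (ho : ∀ i j, i ≠ j → H (e i) (e j) = 0) {f : Fin r → I} (hf : Function.Injective f) :
    h (wedgeι E r (e ∘ f)) (wedgeι E r (e ∘ f)) = ∏ i, H (e (f i)) (e (f i)) :=
  (hh.2.2.2.2 _ _).trans (det_gram_comp_of_injective ho hf)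

lemma apply_wedgeMul_self {h₂ : ⋀[E]^2 V → ⋀[E]^2 V → E} {h₄ : ⋀[E]^4 V → ⋀[E]^4 V → E}
    (hh₂ : IsDetForm ρ H 2 h₂) (hh₄ : IsDetForm ρ H 4 h₄) {e : I → V}
    (ho : ∀ i j, i ≠ j → H (e i) (e j) = 0) {f g : Fin 2 → I}
    (hfg : Function.Injective (Fin.append f g)) :
    h₄ (wedgeMul E (wedgeι E 2 (e ∘ f)) (wedgeι E 2 (e ∘ g)))
        (wedgeMul E (wedgeι E 2 (e ∘ f)) (wedgeι E 2 (e ∘ g))) =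
      h₂ (wedgeι E 2 (e ∘ f)) (wedgeι E 2 (e ∘ f)) *
        h₂ (wedgeι E 2 (e ∘ g)) (wedgeι E 2 (e ∘ g)) := by
  obtain ⟨hf, hg, -⟩ := Fin.append_injective_iff.1 hfg
  rw [wedgeMul_wedgeι, ← Fin.comp_append, hh₄.apply_wedgeι_comp_self ho hfg,
    hh₂.apply_wedgeι_comp_self ho hf, hh₂.apply_wedgeι_comp_self ho hg]
  exact Fin.prod_univ_add (a := 2) (b := 2) _ |>.trans
    (by simp only [Fin.append_left, Fin.append_right])

variable [LinearOrder I]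

lemma apply_exteriorPower_of_ne (hh : IsDetForm ρ H r h) {e : Basis I E V}
    (ho : ∀ i j, i ≠ j → H (e i) (e j) = 0) {s t : Set.powersetCard I r} (hst : s ≠ t) :
    h (e.exteriorPower r s) (e.exteriorPower r t) = 0 := by
  obtain ⟨i, his, hit⟩ := (exists_mem_notMem_iff_ne s t).1 hst
  obtain ⟨k, rfl⟩ := (mem_range_ofFinEmbEquiv_symm_iff_mem s i).2 his
  rw [e.exteriorPower_apply_eq_wedgeι, e.exteriorPower_apply_eq_wedgeι, hh.2.2.2.2]
  exact det_gram_eq_zero_of_notMem_range ho ((mem_range_ofFinEmbEquiv_symm_iff_mem t _).not.2 hit)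

lemma apply_exteriorPower_self_ne_zero (hh : IsDetForm ρ H r h) {e : Basis I E V}
    (ho : ∀ i j, i ≠ j → H (e i) (e j) = 0) (hne : ∀ i, H (e i) (e i) ≠ 0)
    (s : Set.powersetCard I r) :
    h (e.exteriorPower r s) (e.exteriorPower r s) ≠ 0 := by
  rw [e.exteriorPower_apply_eq_wedgeι,
    hh.apply_wedgeι_comp_self ho (ofFinEmbEquiv.symm s).injective]
  exact Finset.prod_ne_zero_iff.2 fun i _ => hne _

end IsDetForm

lemma Module.Basis.apply_apply_eq_smul {R M ι : Type*} [CommSemiring R] [AddCommMonoid M]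
    [Module R M] (b : Basis ι R M) {σ : R →+* R} (hσ : ∀ a, σ (σ a) = a) (f : M →ₛₗ[σ] M)
    {c : R} (hb : ∀ i, f (f (b i)) = c • b i) (x : M) : f (f x) = c • x := by
  induction b.mem_span x using Submodule.span_induction with
  | mem _ hx => obtain ⟨i, rfl⟩ := hx; exact hb i
  | zero => simp
  | add x y _ _ hx hy => rw [map_add, map_add, hx, hy, smul_add]
  | smul a x _ hx => rw [map_smulₛₗ, map_smulₛₗ, hσ, hx, smul_comm]

section FourDimensional

variable {E : Type*} [Field E] {V : Type*} [AddCommGroup V] [Module E V]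

def vol (h₄ : ⋀[E]^4 V → ⋀[E]^4 V → E) (d : ⋀[E]^4 V ≃ₗ[E] E) : E :=
  h₄ (d.symm 1) (d.symm 1)

def pairCompl : Set.powersetCard (Fin 4) 2 ≃ Set.powersetCard (Fin 4) 2 :=
  Set.powersetCard.compl (by simp)

lemma pairCompl_pairCompl (s : Set.powersetCard (Fin 4) 2) : pairCompl (pairCompl s) = s := by
  ext
  simp [pairCompl]

variable (e : Basis (Fin 4) E V) (d : ⋀[E]^4 V ≃ₗ[E] E)

lemma wedgeMul_exteriorPower_pairCompl_of_ne {s t : Set.powersetCard (Fin 4) 2} (h : t ≠ s) :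
    wedgeMul E (e.exteriorPower 2 (pairCompl s)) (e.exteriorPower 2 t) = 0 :=
  Subtype.ext (by
    rw [exteriorPower.basis_apply, exteriorPower.basis_apply]
    exact ιMulti_family_mul_of_not_disjoint E e _ _ (not_disjoint_compl_of_ne _ h.symm))

lemma eq_zero_of_forall_wedgeMul_exteriorPower {x : ⋀[E]^2 V}
    (hx : ∀ t, wedgeMul E x (e.exteriorPower 2 t) = 0) : x = 0 :=
  exteriorPower.eq_zero_of_forall_mul_basis_eq_zero e (by simp) x fun t =>
    congrArg Subtype.val (hx t)

lemma wedgeMul_exteriorPower_comm (s t : Set.powersetCard (Fin 4) 2) :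
    wedgeMul E (e.exteriorPower 2 s) (e.exteriorPower 2 t) =
      wedgeMul E (e.exteriorPower 2 t) (e.exteriorPower 2 s) := by
  rw [e.exteriorPower_apply_eq_wedgeι, e.exteriorPower_apply_eq_wedgeι, wedgeMul_wedgeι_comm]

lemma wedgeMul_exteriorPower_pairCompl_self_ne_zero (s : Set.powersetCard (Fin 4) 2) :
    d (wedgeMul E (e.exteriorPower 2 (pairCompl s)) (e.exteriorPower 2 s)) ≠ 0 := by
  intro h0
  refine (e.exteriorPower 2).ne_zero (pairCompl s)
    (eq_zero_of_forall_wedgeMul_exteriorPower e fun t => ?_)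
  rcases eq_or_ne t s with rfl | hts
  · exact d.map_eq_zero_iff.1 h0
  · exact wedgeMul_exteriorPower_pairCompl_of_ne e hts

variable {ρ : E →+* E} {H : V → V → E} {h₂ : ⋀[E]^2 V → ⋀[E]^2 V → E}
  {h₄ : ⋀[E]^4 V → ⋀[E]^4 V → E}

lemma apply_exteriorPower_eq_smul_pairCompl (he : ∀ i j, i ≠ j → H (e i) (e j) = 0)
    (hh₂ : IsDetForm ρ H 2 h₂) (L : ⋀[E]^2 V → ⋀[E]^2 V)
    (hL : ∀ x y, d (wedgeMul E (L x) y) = h₂ x y) (s : Set.powersetCard (Fin 4) 2) :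
    L (e.exteriorPower 2 s) = (h₂ (e.exteriorPower 2 s) (e.exteriorPower 2 s) /
      d (wedgeMul E (e.exteriorPower 2 (pairCompl s)) (e.exteriorPower 2 s))) •
      e.exteriorPower 2 (pairCompl s) := by
  rw [← sub_eq_zero]
  refine eq_zero_of_forall_wedgeMul_exteriorPower e fun t => d.injective ?_
  rw [← wedgeMulₗ_apply, map_sub, map_smul, LinearMap.sub_apply, LinearMap.smul_apply, map_sub,
    map_smul, map_zero, wedgeMulₗ_apply, wedgeMulₗ_apply, hL, smul_eq_mul]
  rcases eq_or_ne t s with rfl | hts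
  · rw [div_mul_cancel₀ _ (wedgeMul_exteriorPower_pairCompl_self_ne_zero e d t), sub_self]
  · rw [hh₂.apply_exteriorPower_of_ne he hts.symm, wedgeMul_exteriorPower_pairCompl_of_ne e hts,
      map_zero, mul_zero, sub_zero]

lemma vol_eq (he : ∀ i j, i ≠ j → H (e i) (e j) = 0) (hh₂ : IsDetForm ρ H 2 h₂)
    (hh₄ : IsDetForm ρ H 4 h₄) (s : Set.powersetCard (Fin 4) 2) :
    vol h₄ d =
      (ρ (d (wedgeMul E (e.exteriorPower 2 (pairCompl s)) (e.exteriorPower 2 s))))⁻¹ *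
        (h₂ (e.exteriorPower 2 (pairCompl s)) (e.exteriorPower 2 (pairCompl s)) *
          h₂ (e.exteriorPower 2 s) (e.exteriorPower 2 s)) *
        (d (wedgeMul E (e.exteriorPower 2 (pairCompl s)) (e.exteriorPower 2 s)))⁻¹ := by
  have hκ := wedgeMul_exteriorPower_pairCompl_self_ne_zero e d s
  set w := wedgeMul E (e.exteriorPower 2 (pairCompl s)) (e.exteriorPower 2 s) with hw
  have hu : d.symm 1 = (d w)⁻¹ • w := by
    rw [d.symm_apply_eq, map_smul, smul_eq_mul, inv_mul_cancel₀ hκ]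
  rw [vol, hu, hh₄.2.2.1, map_inv₀, hw, e.exteriorPower_apply_eq_wedgeι,
    e.exteriorPower_apply_eq_wedgeι, hh₂.apply_wedgeMul_self hh₄ he]
  refine Function.Injective.of_comp (f := ⇑e)
    (injective_of_wedgeι_ne_zero (R := E) fun h0 => hκ ?_)
  rw [hw, e.exteriorPower_apply_eq_wedgeι, e.exteriorPower_apply_eq_wedgeι, wedgeMul_wedgeι,
    ← Fin.comp_append, h0, map_zero]

lemma apply_apply_exteriorPower_basis (he : ∀ i j, i ≠ j → H (e i) (e j) = 0)
    (hh₂ : IsDetForm ρ H 2 h₂) (hh₄ : IsDetForm ρ H 4 h₄) (L : ⋀[E]^2 V →ₛₗ[ρ] ⋀[E]^2 V)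
    (hL : ∀ x y, d (wedgeMul E (L x) y) = h₂ x y) (s : Set.powersetCard (Fin 4) 2) :
    L (L (e.exteriorPower 2 s)) = vol h₄ d • e.exteriorPower 2 s := by
  rw [apply_exteriorPower_eq_smul_pairCompl e d he hh₂ L hL s, map_smulₛₗ,
    apply_exteriorPower_eq_smul_pairCompl e d he hh₂ L hL (pairCompl s), pairCompl_pairCompl,
    smul_smul, vol_eq e d he hh₂ hh₄ s, wedgeMul_exteriorPower_comm e s, map_div₀,
    ← hh₂.2.2.2.1]
  congr 1
  ring

lemma vol_ne_zero (he : ∀ i j, i ≠ j → H (e i) (e j) = 0)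
    (hne : ∀ i, H (e i) (e i) ≠ 0) (hh₂ : IsDetForm ρ H 2 h₂) (hh₄ : IsDetForm ρ H 4 h₄) :
    vol h₄ d ≠ 0 := by
  let s : Set.powersetCard (Fin 4) 2 := ⟨{0, 1}, Set.powersetCard.mem_iff.2 rfl⟩
  have hκ := wedgeMul_exteriorPower_pairCompl_self_ne_zero e d s
  rw [vol_eq e d he hh₂ hh₄ s]
  exact mul_ne_zero (mul_ne_zero (inv_ne_zero ((map_ne_zero ρ).2 hκ))
    (mul_ne_zero (hh₂.apply_exteriorPower_self_ne_zero he hne _)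
      (hh₂.apply_exteriorPower_self_ne_zero he hne _))) (inv_ne_zero hκ)

end FourDimensional

theorem L_squared_eq_vol_general
    {F E : Type*} [Field F] [Field E] [Algebra F E]
    (ρ : E →+* E) (hρ_invol : ∀ a, ρ (ρ a) = a) (hρ_ne : ρ ≠ RingHom.id E)
    (hρ_fixed_field : ∀ a : E, ρ a = a → ∃ c : F, algebraMap F E c = a)
    {V : Type*} [AddCommGroup V] [Module E V] [FiniteDimensional E V]
    (hV4 : Module.finrank E V = 4)
    (H : V → V → E)
    (H_add_left : ∀ x y z, H (x + y) z = H x z + H y z)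
    (H_add_right : ∀ x y z, H x (y + z) = H x y + H x z)
    (H_smul : ∀ (a b : E) (x y : V), H (a • x) (b • y) = ρ a * H x y * b)
    (H_conj : ∀ x y, H x y = ρ (H y x))
    (H_nondeg : ∀ x, (∀ y, H x y = 0) → x = 0)
    (d : (⋀[E]^4 V) ≃ₗ[E] E)
    (h₂ : (⋀[E]^2 V) → (⋀[E]^2 V) → E) (hh₂ : IsDetForm ρ H 2 h₂)
    (h₄ : (⋀[E]^4 V) → (⋀[E]^4 V) → E) (hh₄ : IsDetForm ρ H 4 h₄)
    (L : (⋀[E]^2 V) → (⋀[E]^2 V))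
    (L_add : ∀ x y, L (x + y) = L x + L y)
    (L_smul : ∀ (a : E) (x : ⋀[E]^2 V), L (a • x) = ρ a • L x)
    (L_def : ∀ x y : ⋀[E]^2 V, d (wedgeMul E (L x) y) = h₂ x y) :
    (∀ x : ⋀[E]^2 V, L (L x) = h₄ (d.symm 1) (d.symm 1) • x) ∧
    (∃ c : F, c ≠ 0 ∧ algebraMap F E c = h₄ (d.symm 1) (d.symm 1)) := by
  obtain ⟨e, he, hne⟩ := IsHermitianForm.exists_orthogonal_basis
    ⟨H_add_left, H_add_right, H_smul, H_conj⟩ hρ_ne H_nondeg hV4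
  let Lₛ : ⋀[E]^2 V →ₛₗ[ρ] ⋀[E]^2 V := { toFun := L, map_add' := L_add, map_smul' := L_smul }
  refine ⟨(e.exteriorPower 2).apply_apply_eq_smul hρ_invol Lₛ
    (apply_apply_exteriorPower_basis e d he hh₂ hh₄ Lₛ L_def), ?_⟩
  obtain ⟨c, hc⟩ := hρ_fixed_field _ (hh₄.2.2.2.1 _ _).symm
  exact ⟨c, fun hc0 => vol_ne_zero e d he hne hh₂ hh₄ (by rw [vol, ← hc, hc0, map_zero]), hc⟩

/-- For a 4-dimensional hermitian space `(V,H)` over `E` with a fixed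
trivialization `d : ⋀⁴V ≅ E`, the `ρ`-semilinear endomorphism `L = ψ⁻¹ ∘ ι ∘ ⋀²φ` of `⋀²V`
(characterized by `d(L(x) ∧ y) = h₂(x, y)` for all `x, y ∈ ⋀²V`) satisfies
`L ∘ L = vol(H,d) · id`, and the scalar `vol(H,d)` lies in `F^×`. -/
theorem L_squared_eq_vol
    {F E : Type*} [Field F] [CharZero F] [Field E] [Algebra F E]
    (hquad : Module.finrank F E = 2)
    (ρ : E →+* E) (hρ_invol : ∀ a, ρ (ρ a) = a) (hρ_ne : ρ ≠ RingHom.id E)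
    (hρ_fixF : ∀ c : F, ρ (algebraMap F E c) = algebraMap F E c)
    (hρ_fixed_field : ∀ a : E, ρ a = a → ∃ c : F, algebraMap F E c = a)
    {V : Type*} [AddCommGroup V] [Module E V] [FiniteDimensional E V]
    (hV4 : Module.finrank E V = 4)
    (H : V → V → E)
    (H_add_left : ∀ x y z, H (x + y) z = H x z + H y z)
    (H_add_right : ∀ x y z, H x (y + z) = H x y + H x z)
    (H_smul : ∀ (a b : E) (x y : V), H (a • x) (b • y) = ρ a * H x y * b)
    (H_conj : ∀ x y, H x y = ρ (H y x))
    (H_nondeg : ∀ x, (∀ y, H x y = 0) → x = 0)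
    (d : (⋀[E]^4 V) ≃ₗ[E] E)
    (h₂ : (⋀[E]^2 V) → (⋀[E]^2 V) → E) (hh₂ : IsDetForm ρ H 2 h₂)
    (h₄ : (⋀[E]^4 V) → (⋀[E]^4 V) → E) (hh₄ : IsDetForm ρ H 4 h₄)
    (L : (⋀[E]^2 V) → (⋀[E]^2 V))
    (L_add : ∀ x y, L (x + y) = L x + L y)
    (L_smul : ∀ (a : E) (x : ⋀[E]^2 V), L (a • x) = ρ a • L x)
    (L_def : ∀ x y : ⋀[E]^2 V, d (wedgeMul E (L x) y) = h₂ x y) :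
    (∀ x : ⋀[E]^2 V, L (L x) = h₄ (d.symm 1) (d.symm 1) • x) ∧
    (∃ c : F, c ≠ 0 ∧ algebraMap F E c = h₄ (d.symm 1) (d.symm 1)) :=
  L_squared_eq_vol_general ρ hρ_invol hρ_ne hρ_fixed_field hV4 H H_add_left H_add_right H_smul
    H_conj H_nondeg d h₂ hh₂ h₄ hh₄ L L_add L_smul L_def
end

section
/- Suppose v₁, v₂, v₃, v₄ is an orthogonal basis of V with H(v_i, v_i) = a_i ∈ F^×, and d is normalized by d(v₁∧v₂∧v₃∧v₄) = −1. Then L(v₁∧v₂) = −a₁a₂·(v₃∧v₄), L(v₁∧v₃) = a₁a₃·(v₂∧v₄), L(v₁∧v₄) = −a₁a₄·(v₂∧v₃), L(v₂∧v₃) = −a₂a₃·(v₁∧v₄), L(v₂∧v₄) = a₂a₄·(v₁∧v₃), and L(v₃∧v₄) = −a₃a₄·(v₁∧v₂); in particular L ∘ L = a₁a₂a₃a₄ · id. -/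
/-!
On `⋀²V` the wedge pairing `(x, y) ↦ d (x ∧ y)` pairs the basis vector `vᵢ ∧ vⱼ` only with the
complementary one `vₖ ∧ vₗ`, with the sign of the permutation `(i j k l)`. So every `w ∈ ⋀²V` is
recovered from its pairings with the basis, and for `w = L x` these pairings are the Gram
determinants `h₂ x (vₖ ∧ vₗ)`; for an orthogonal basis only the diagonal one is nonzero.
Finally `L ∘ L` is `E`-linear because `ρ` is an involution, so it suffices to check it on the basis.
-/

open exteriorPower

section

variable {R M N : Type*} [CommRing R] [AddCommGroup M] [Module R M] [AddCommGroup N] [Module R N]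

lemma wedgeι_eq_ιMulti (n : ℕ) : wedgeι R n = ιMulti (M := M) R n := rfl

lemma wedgeMul_add_left (x y z : ⋀[R]^2 M) :
    wedgeMul R (x + y) z = wedgeMul R x z + wedgeMul R y z :=
  Subtype.ext (add_mul _ _ _)

lemma wedgeMul_smul_left (c : R) (x z : ⋀[R]^2 M) :
    wedgeMul R (c • x) z = c • wedgeMul R x z :=
  Subtype.ext (smul_mul_assoc _ _ _)

lemma wedgeMul_ιMulti (a b c e : M) :
    wedgeMul R (ιMulti R 2 ![a, b]) (ιMulti R 2 ![c, e]) = ιMulti R 4 ![a, b, c, e] := by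
  have happend : Fin.append ![a, b] ![c, e] = ![a, b, c, e] := by ext i; fin_cases i <;> rfl
  exact Subtype.ext (happend ▸ ExteriorAlgebra.ιMulti_mul_ιMulti _ _)

lemma exteriorPower.ιMulti_two_swap (a b : M) : ιMulti R 2 ![b, a] = -ιMulti R 2 ![a, b] := by
  simpa using (ιMulti R 2).map_swap ![a, b] (i := 0) (j := 1) (by decide)

lemma exteriorPower.ιMulti_four_eq_zero_of_repeat (a b c : M) :
    ιMulti R 4 ![a, b, a, c] = 0 ∧ ιMulti R 4 ![a, b, c, a] = 0 ∧
      ιMulti R 4 ![a, b, b, c] = 0 ∧ ιMulti R 4 ![a, b, c, b] = 0 :=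
  ⟨(ιMulti R 4).map_eq_zero_of_eq _ (i := 0) (j := 2) rfl (by decide),
    (ιMulti R 4).map_eq_zero_of_eq _ (i := 0) (j := 3) rfl (by decide),
    (ιMulti R 4).map_eq_zero_of_eq _ (i := 1) (j := 2) rfl (by decide),
    (ιMulti R 4).map_eq_zero_of_eq _ (i := 1) (j := 3) rfl (by decide)⟩

lemma exteriorPower.ιMulti_four_shuffle (v : Fin 4 → M) :
    ιMulti R 4 ![v 0, v 1, v 2, v 3] = ιMulti R 4 v ∧
      ιMulti R 4 ![v 0, v 2, v 1, v 3] = -ιMulti R 4 v ∧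
      ιMulti R 4 ![v 0, v 3, v 1, v 2] = ιMulti R 4 v ∧
      ιMulti R 4 ![v 1, v 2, v 0, v 3] = ιMulti R 4 v ∧
      ιMulti R 4 ![v 1, v 3, v 0, v 2] = -ιMulti R 4 v ∧
      ιMulti R 4 ![v 2, v 3, v 0, v 1] = ιMulti R 4 v := by
  have hperm (σ : Equiv.Perm (Fin 4)) (u : Fin 4 → M) (hu : u = v ∘ σ) :
      ιMulti R 4 u = σ.sign • ιMulti R 4 v :=
    hu ▸ (ιMulti R 4).map_perm v σ
  refine ⟨?_, ?_, ?_, ?_, ?_, ?_⟩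
  · simpa using hperm 1 _ (by ext k; fin_cases k <;> rfl)
  · simpa using hperm (.swap 1 2) _ (by ext k; fin_cases k <;> rfl)
  · simpa using hperm (.swap 1 3 * .swap 2 3) _ (by ext k; fin_cases k <;> rfl)
  · simpa using hperm (.swap 0 2 * .swap 0 1) _ (by ext k; fin_cases k <;> rfl)
  · simpa using hperm (.swap 0 1 * .swap 1 3 * .swap 3 2) _ (by ext k; fin_cases k <;> rfl)
  · simpa using hperm (.swap 0 2 * .swap 1 3) _ (by ext k; fin_cases k <;> rfl)

lemma exteriorPower.linearMap_ext_two {I : Type*} [LinearOrder I] (b : Module.Basis I R M)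
    {f g : ⋀[R]^2 M →ₗ[R] N}
    (h : ∀ i j, i < j → f (ιMulti R 2 ![b i, b j]) = g (ιMulti R 2 ![b i, b j])) : f = g := by
  refine linearMap_ext (b.ext_alternating fun u hu => ?_)
  have hu_eq : (fun k => b (u k)) = ![b (u 0), b (u 1)] := by ext k; fin_cases k <;> rfl
  simp only [LinearMap.compAlternatingMap_apply, hu_eq]
  rcases (hu.ne (show (0 : Fin 2) ≠ 1 by decide)).lt_or_gt with hlt | hgt
  · exact h _ _ hlt
  · have h' := h _ _ hgt
    rwa [ιMulti_two_swap, map_neg, map_neg, neg_inj] at h'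

lemma exteriorPower.linearMap_ext_two_fin_four (b : Module.Basis (Fin 4) R M)
    {f g : ⋀[R]^2 M →ₗ[R] N}
    (h01 : f (ιMulti R 2 ![b 0, b 1]) = g (ιMulti R 2 ![b 0, b 1]))
    (h02 : f (ιMulti R 2 ![b 0, b 2]) = g (ιMulti R 2 ![b 0, b 2]))
    (h03 : f (ιMulti R 2 ![b 0, b 3]) = g (ιMulti R 2 ![b 0, b 3]))
    (h12 : f (ιMulti R 2 ![b 1, b 2]) = g (ιMulti R 2 ![b 1, b 2]))
    (h13 : f (ιMulti R 2 ![b 1, b 3]) = g (ιMulti R 2 ![b 1, b 3]))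
    (h23 : f (ιMulti R 2 ![b 2, b 3]) = g (ιMulti R 2 ![b 2, b 3])) : f = g := by
  refine linearMap_ext_two b fun i j hij => ?_
  have hpairs : ∀ i j : Fin 4, i < j → i = 0 ∧ j = 1 ∨ i = 0 ∧ j = 2 ∨ i = 0 ∧ j = 3 ∨
      i = 1 ∧ j = 2 ∨ i = 1 ∧ j = 3 ∨ i = 2 ∧ j = 3 := by decide
  rcases hpairs i j hij with ⟨rfl, rfl⟩ | ⟨rfl, rfl⟩ | ⟨rfl, rfl⟩ | ⟨rfl, rfl⟩ | ⟨rfl, rfl⟩ |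
    ⟨rfl, rfl⟩ <;> assumption

lemma smul_eq_sum_of_wedgeMul_eq (d : ⋀[R]^4 M →ₗ[R] R) (b : Module.Basis (Fin 4) R M)
    {u : ⋀[R]^2 M} {φ : ⋀[R]^2 M → R} (hu : ∀ y, d (wedgeMul R u y) = φ y) :
    d (ιMulti R 4 b) • u =
      φ (ιMulti R 2 ![b 2, b 3]) • ιMulti R 2 ![b 0, b 1]
      - φ (ιMulti R 2 ![b 1, b 3]) • ιMulti R 2 ![b 0, b 2]
      + φ (ιMulti R 2 ![b 1, b 2]) • ιMulti R 2 ![b 0, b 3]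
      + φ (ιMulti R 2 ![b 0, b 3]) • ιMulti R 2 ![b 1, b 2]
      - φ (ιMulti R 2 ![b 0, b 2]) • ιMulti R 2 ![b 1, b 3]
      + φ (ιMulti R 2 ![b 0, b 1]) • ιMulti R 2 ![b 2, b 3] := by
  let expansion : ⋀[R]^2 M →ₗ[R] ⋀[R]^2 M :=
    { toFun w := d (wedgeMul R w (ιMulti R 2 ![b 2, b 3])) • ιMulti R 2 ![b 0, b 1]
        - d (wedgeMul R w (ιMulti R 2 ![b 1, b 3])) • ιMulti R 2 ![b 0, b 2]
        + d (wedgeMul R w (ιMulti R 2 ![b 1, b 2])) • ιMulti R 2 ![b 0, b 3]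
        + d (wedgeMul R w (ιMulti R 2 ![b 0, b 3])) • ιMulti R 2 ![b 1, b 2]
        - d (wedgeMul R w (ιMulti R 2 ![b 0, b 2])) • ιMulti R 2 ![b 1, b 3]
        + d (wedgeMul R w (ιMulti R 2 ![b 0, b 1])) • ιMulti R 2 ![b 2, b 3]
      map_add' x y := by simp only [wedgeMul_add_left, map_add]; module
      map_smul' c x := by
        simp only [wedgeMul_smul_left, map_smul, smul_eq_mul, RingHom.id_apply]; module }
  have h : d (ιMulti R 4 b) • LinearMap.id = expansion := by
    refine linearMap_ext_two_fin_four b ?_ ?_ ?_ ?_ ?_ ?_ <;>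
      simp only [expansion, LinearMap.coe_mk, AddHom.coe_mk, LinearMap.smul_apply,
        LinearMap.id_apply, wedgeMul_ιMulti, ιMulti_four_eq_zero_of_repeat, ιMulti_four_shuffle,
        map_zero, map_neg] <;>
      module
  simpa [expansion, hu] using LinearMap.congr_fun h u

end

lemma IsDetForm.apply_ιMulti_two {E V : Type*} [Field E] [AddCommGroup V] [Module E V]
    {ρ : E →+* E} {H : V → V → E} {h : ⋀[E]^2 V → ⋀[E]^2 V → E} (hh : IsDetForm ρ H 2 h)
    (a b c e : V) :
    h (ιMulti E 2 ![a, b]) (ιMulti E 2 ![c, e]) = H a c * H b e - H a e * H b c := by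
  simpa [Matrix.det_fin_two, wedgeι_eq_ιMulti] using hh.2.2.2.2 ![a, b] ![c, e]

theorem L_on_orthogonal_basis_general
    {F E : Type*} [Field F] [Field E] [Algebra F E]
    (ρ : E →+* E) (hρ_invol : ∀ a, ρ (ρ a) = a)
    (hρ_fixF : ∀ c : F, ρ (algebraMap F E c) = algebraMap F E c)
    {V : Type*} [AddCommGroup V] [Module E V]
    (H : V → V → E)
    (d : (⋀[E]^4 V) ≃ₗ[E] E)
    (h₂ : (⋀[E]^2 V) → (⋀[E]^2 V) → E) (hh₂ : IsDetForm ρ H 2 h₂)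
    (L : (⋀[E]^2 V) → (⋀[E]^2 V))
    (L_add : ∀ x y, L (x + y) = L x + L y)
    (L_smul : ∀ (a : E) (x : ⋀[E]^2 V), L (a • x) = ρ a • L x)
    (L_def : ∀ x y : ⋀[E]^2 V, d (wedgeMul E (L x) y) = h₂ x y)
    (v : Module.Basis (Fin 4) E V) (a : Fin 4 → F)
    (hGram : ∀ i j, H (v i) (v j) = if i = j then algebraMap F E (a i) else 0)
    (hd : d (wedgeι E 4 ⇑v) = -1) :
    L (wedgeι E 2 ![v 0, v 1]) = -(algebraMap F E (a 0 * a 1)) • wedgeι E 2 ![v 2, v 3] ∧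
    L (wedgeι E 2 ![v 0, v 2]) = (algebraMap F E (a 0 * a 2)) • wedgeι E 2 ![v 1, v 3] ∧
    L (wedgeι E 2 ![v 0, v 3]) = -(algebraMap F E (a 0 * a 3)) • wedgeι E 2 ![v 1, v 2] ∧
    L (wedgeι E 2 ![v 1, v 2]) = -(algebraMap F E (a 1 * a 2)) • wedgeι E 2 ![v 0, v 3] ∧
    L (wedgeι E 2 ![v 1, v 3]) = (algebraMap F E (a 1 * a 3)) • wedgeι E 2 ![v 0, v 2] ∧
    L (wedgeι E 2 ![v 2, v 3]) = -(algebraMap F E (a 2 * a 3)) • wedgeι E 2 ![v 0, v 1] ∧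
    (∀ x : ⋀[E]^2 V, L (L x) = algebraMap F E (a 0 * a 1 * a 2 * a 3) • x) := by
  simp only [wedgeι_eq_ιMulti] at hd L_def ⊢
  have hL (i j : Fin 4) :=
    smul_eq_sum_of_wedgeMul_eq d.toLinearMap v (L_def (ιMulti E 2 ![v i, v j]))
  simp only [LinearEquiv.coe_coe, hd, hh₂.apply_ιMulti_two, hGram] at hL
  have h01 : L (ιMulti E 2 ![v 0, v 1]) =
      -(algebraMap F E (a 0 * a 1)) • ιMulti E 2 ![v 2, v 3] := by
    linear_combination (norm := (simp only [Fin.reduceEq, ↓reduceIte, map_mul]; module)) -hL 0 1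
  have h02 : L (ιMulti E 2 ![v 0, v 2]) =
      (algebraMap F E (a 0 * a 2)) • ιMulti E 2 ![v 1, v 3] := by
    linear_combination (norm := (simp only [Fin.reduceEq, ↓reduceIte, map_mul]; module)) -hL 0 2
  have h03 : L (ιMulti E 2 ![v 0, v 3]) =
      -(algebraMap F E (a 0 * a 3)) • ιMulti E 2 ![v 1, v 2] := by
    linear_combination (norm := (simp only [Fin.reduceEq, ↓reduceIte, map_mul]; module)) -hL 0 3
  have h12 : L (ιMulti E 2 ![v 1, v 2]) =
      -(algebraMap F E (a 1 * a 2)) • ιMulti E 2 ![v 0, v 3] := by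
    linear_combination (norm := (simp only [Fin.reduceEq, ↓reduceIte, map_mul]; module)) -hL 1 2
  have h13 : L (ιMulti E 2 ![v 1, v 3]) =
      (algebraMap F E (a 1 * a 3)) • ιMulti E 2 ![v 0, v 2] := by
    linear_combination (norm := (simp only [Fin.reduceEq, ↓reduceIte, map_mul]; module)) -hL 1 3
  have h23 : L (ιMulti E 2 ![v 2, v 3]) =
      -(algebraMap F E (a 2 * a 3)) • ιMulti E 2 ![v 0, v 1] := by
    linear_combination (norm := (simp only [Fin.reduceEq, ↓reduceIte, map_mul]; module)) -hL 2 3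
  refine ⟨h01, h02, h03, h12, h13, h23, fun x => ?_⟩
  let LL : ⋀[E]^2 V →ₗ[E] ⋀[E]^2 V :=
    { toFun x := L (L x)
      map_add' x y := by simp only [L_add]
      map_smul' c x := by simp only [L_smul, hρ_invol, RingHom.id_apply] }
  suffices h : LL = algebraMap F E (a 0 * a 1 * a 2 * a 3) • LinearMap.id from
    LinearMap.congr_fun h x
  refine linearMap_ext_two_fin_four v ?_ ?_ ?_ ?_ ?_ ?_ <;>
    simp only [LL, LinearMap.coe_mk, AddHom.coe_mk, LinearMap.smul_apply, LinearMap.id_apply,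
      h01, h02, h03, h12, h13, h23, L_smul, map_neg, hρ_fixF] <;>
    module

/-- If `v₁, v₂, v₃, v₄` is an orthogonal basis of the 4-dimensional hermitian
space `(V,H)` with `H(vᵢ,vᵢ) = aᵢ ∈ F^×`, and `d` is normalized by `d(v₁∧v₂∧v₃∧v₄) = -1`, then
the semilinear map `L` is given on the wedge basis by the explicit formulas below; in particular
`L ∘ L = a₁a₂a₃a₄ · id`. -/
theorem L_on_orthogonal_basis
    {F E : Type*} [Field F] [CharZero F] [Field E] [Algebra F E]
    (hquad : Module.finrank F E = 2)
    (ρ : E →+* E) (hρ_invol : ∀ a, ρ (ρ a) = a) (hρ_ne : ρ ≠ RingHom.id E)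
    (hρ_fixF : ∀ c : F, ρ (algebraMap F E c) = algebraMap F E c)
    (hρ_fixed_field : ∀ a : E, ρ a = a → ∃ c : F, algebraMap F E c = a)
    {V : Type*} [AddCommGroup V] [Module E V] [FiniteDimensional E V]
    (hV4 : Module.finrank E V = 4)
    (H : V → V → E)
    (H_add_left : ∀ x y z, H (x + y) z = H x z + H y z)
    (H_add_right : ∀ x y z, H x (y + z) = H x y + H x z)
    (H_smul : ∀ (a b : E) (x y : V), H (a • x) (b • y) = ρ a * H x y * b)
    (H_conj : ∀ x y, H x y = ρ (H y x))
    (H_nondeg : ∀ x, (∀ y, H x y = 0) → x = 0)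
    (d : (⋀[E]^4 V) ≃ₗ[E] E)
    (h₂ : (⋀[E]^2 V) → (⋀[E]^2 V) → E) (hh₂ : IsDetForm ρ H 2 h₂)
    (L : (⋀[E]^2 V) → (⋀[E]^2 V))
    (L_add : ∀ x y, L (x + y) = L x + L y)
    (L_smul : ∀ (a : E) (x : ⋀[E]^2 V), L (a • x) = ρ a • L x)
    (L_def : ∀ x y : ⋀[E]^2 V, d (wedgeMul E (L x) y) = h₂ x y)
    (v : Module.Basis (Fin 4) E V) (a : Fin 4 → F) (ha : ∀ i, a i ≠ 0)
    (hGram : ∀ i j, H (v i) (v j) = if i = j then algebraMap F E (a i) else 0)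
    (hd : d (wedgeι E 4 ⇑v) = -1) :
    L (wedgeι E 2 ![v 0, v 1]) = -(algebraMap F E (a 0 * a 1)) • wedgeι E 2 ![v 2, v 3] ∧
    L (wedgeι E 2 ![v 0, v 2]) = (algebraMap F E (a 0 * a 2)) • wedgeι E 2 ![v 1, v 3] ∧
    L (wedgeι E 2 ![v 0, v 3]) = -(algebraMap F E (a 0 * a 3)) • wedgeι E 2 ![v 1, v 2] ∧
    L (wedgeι E 2 ![v 1, v 2]) = -(algebraMap F E (a 1 * a 2)) • wedgeι E 2 ![v 0, v 3] ∧
    L (wedgeι E 2 ![v 1, v 3]) = (algebraMap F E (a 1 * a 3)) • wedgeι E 2 ![v 0, v 2] ∧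
    L (wedgeι E 2 ![v 2, v 3]) = -(algebraMap F E (a 2 * a 3)) • wedgeι E 2 ![v 0, v 1] ∧
    (∀ x : ⋀[E]^2 V, L (L x) = algebraMap F E (a 0 * a 1 * a 2 * a 3) • x) :=
  L_on_orthogonal_basis_general ρ hρ_invol hρ_fixF H d h₂ hh₂ L L_add L_smul L_def v a hGram hd
end

section
/- For all x, y ∈ Ṽ one has (x·𝐣, y) = (y·𝐣, x) and ρ((x·𝐣, y·𝐣)) = −J·(x,y), where x·𝐣 = L(x). -/
open ExteriorAlgebra in
lemma wedge2_mul_comm (E : Type*) [CommRing E] {V : Type*} [AddCommGroup V] [Module E V]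
    (x y : ⋀[E]^2 V) :
    (x : ExteriorAlgebra E V) * (y : ExteriorAlgebra E V)
      = (y : ExteriorAlgebra E V) * (x : ExteriorAlgebra E V) := by
  have hx : (x : ExteriorAlgebra E V) ∈
      LinearMap.range (ι E (M := V)) * LinearMap.range (ι E (M := V)) := by
    have h : (x : ExteriorAlgebra E V) ∈ LinearMap.range (ι E (M := V)) ^ 2 := x.2
    rwa [pow_two] at h
  have hy : (y : ExteriorAlgebra E V) ∈
      LinearMap.range (ι E (M := V)) * LinearMap.range (ι E (M := V)) := by
    have h : (y : ExteriorAlgebra E V) ∈ LinearMap.range (ι E (M := V)) ^ 2 := y.2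
    rwa [pow_two] at h
  have key : ∀ a ∈ LinearMap.range (ι E (M := V)) * LinearMap.range (ι E (M := V)),
      ∀ m : V, ι E m * a = a * ι E m := by
    intro a ha m
    refine Submodule.mul_induction_on ha ?_ ?_
    · rintro _ ⟨p, rfl⟩ _ ⟨q, rfl⟩
      have h1 : ι E m * ι E p = -(ι E p * ι E m) :=
        eq_neg_of_add_eq_zero_left (ExteriorAlgebra.ι_add_mul_swap (R := E) m p)
      have h2 : ι E m * ι E q = -(ι E q * ι E m) :=
        eq_neg_of_add_eq_zero_left (ExteriorAlgebra.ι_add_mul_swap (R := E) m q)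
      rw [← mul_assoc, h1, neg_mul, mul_assoc, h2, mul_neg, neg_neg, mul_assoc]
    · intro u v hu hv; rw [mul_add, add_mul, hu, hv]
  refine Submodule.mul_induction_on hx ?_ ?_
  · rintro _ ⟨p, rfl⟩ _ ⟨q, rfl⟩
    rw [mul_assoc, key _ hy q, ← mul_assoc, key _ hy p, mul_assoc]
  · intro u v hu hv; rw [mul_add, add_mul, hu, hv]

lemma wedgeMul_comm (E : Type*) [CommRing E] {V : Type*} [AddCommGroup V] [Module E V]
    (x y : ⋀[E]^2 V) : wedgeMul E x y = wedgeMul E y x :=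
  Subtype.ext (wedge2_mul_comm E x y)

lemma wedgeMul_smul_left_s4 (E : Type*) [CommRing E] {V : Type*} [AddCommGroup V] [Module E V]
    (c : E) (x y : ⋀[E]^2 V) : wedgeMul E (c • x) y = c • wedgeMul E x y :=
  Subtype.ext (smul_mul_assoc c (x : ExteriorAlgebra E V) (y : ExteriorAlgebra E V))

/-- On `Ṽ = ⋀²V` with the `E`-skew-hermitian form `(x,y) = 𝐢·h₂(x,y)` and
`x·𝐣 = L(x)`, one has `(x𝐣, y) = (y𝐣, x)` and `ρ((x𝐣, y𝐣)) = -J·(x,y)`. -/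
theorem pairing_j_identities
    {F E : Type*} [Field F] [CharZero F] [Field E] [Algebra F E]
    (hquad : Module.finrank F E = 2)
    (ρ : E →+* E) (hρ_invol : ∀ a, ρ (ρ a) = a) (hρ_ne : ρ ≠ RingHom.id E)
    (hρ_fixF : ∀ c : F, ρ (algebraMap F E c) = algebraMap F E c)
    (hρ_fixed_field : ∀ a : E, ρ a = a → ∃ c : F, algebraMap F E c = a)
    {V : Type*} [AddCommGroup V] [Module E V] [FiniteDimensional E V]
    (hV4 : Module.finrank E V = 4)
    (H : V → V → E)
    (H_add_left : ∀ x y z, H (x + y) z = H x z + H y z)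
    (H_add_right : ∀ x y z, H x (y + z) = H x y + H x z)
    (H_smul : ∀ (a b : E) (x y : V), H (a • x) (b • y) = ρ a * H x y * b)
    (H_conj : ∀ x y, H x y = ρ (H y x))
    (H_nondeg : ∀ x, (∀ y, H x y = 0) → x = 0)
    (d : (⋀[E]^4 V) ≃ₗ[E] E)
    (h₂ : (⋀[E]^2 V) → (⋀[E]^2 V) → E) (hh₂ : IsDetForm ρ H 2 h₂)
    (L : (⋀[E]^2 V) → (⋀[E]^2 V))
    (L_add : ∀ x y, L (x + y) = L x + L y)
    (L_smul : ∀ (a : E) (x : ⋀[E]^2 V), L (a • x) = ρ a • L x)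
    (L_def : ∀ x y : ⋀[E]^2 V, d (wedgeMul E (L x) y) = h₂ x y)
    (J : F) (hJ0 : J ≠ 0)
    (hLL : ∀ x : ⋀[E]^2 V, L (L x) = algebraMap F E J • x)
    (i0 : E) (hi0_ne : i0 ≠ 0) (hi0_trace : ρ i0 = -i0) :
    (∀ x y : ⋀[E]^2 V, i0 * h₂ (L x) y = i0 * h₂ (L y) x) ∧
    (∀ x y : ⋀[E]^2 V,
      ρ (i0 * h₂ (L x) (L y)) = -(algebraMap F E J) * (i0 * h₂ x y)) := by
  have key : ∀ x y : ⋀[E]^2 V,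
      h₂ (L x) y = algebraMap F E J * d (wedgeMul E x y) := by
    intro x y
    have h := L_def (L x) y
    rw [hLL, wedgeMul_smul_left_s4, map_smul, smul_eq_mul] at h
    exact h.symm
  refine ⟨fun x y => ?_, fun x y => ?_⟩
  · rw [key, key, wedgeMul_comm E y x]
  · have hsymm : h₂ (L y) (L x) = ρ (h₂ (L x) (L y)) := hh₂.2.2.2.1 (L y) (L x)
    have hval : h₂ (L y) (L x) = algebraMap F E J * h₂ x y := by
      rw [key, wedgeMul_comm E y (L x), L_def]
    rw [map_mul, hi0_trace, ← hsymm, hval]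
    ring
end

section
/- Let GSU(V,H) := { g ∈ GU(V,H) : det g = ν(g)² }. For every g ∈ GSU(V,H), the map ⋀²g commutes with L, hence is a right-B-linear automorphism of Ṽ, and satisfies ⟨(⋀²g)(x), (⋀²g)(y)⟩ = ν(g)²·⟨x,y⟩ for all x,y ∈ Ṽ. The resulting map GSU(V,H) → GU_B(Ṽ), g ↦ ⋀²g, is a group homomorphism whose kernel is {id_V, −id_V}. -/
/-- The quaternion algebra `B = E ⊕ E𝐣` (elements written `a + b·𝐣`) attached to the quadratic
extension `E` with conjugation `ρ` and to `J = 𝐣² ∈ E`; multiplication is determined by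
`𝐣² = J` and `α·𝐣 = 𝐣·ρ(α)`. -/
def Qa {E : Type*} [Field E] (ρ : E →+* E) (J : E) : Type _ := E × E

namespace Qa

variable {E : Type*} [Field E] {ρ : E →+* E} {J : E}

instance : AddCommGroup (Qa ρ J) := inferInstanceAs (AddCommGroup (E × E))
instance : Module E (Qa ρ J) := inferInstanceAs (Module E (E × E))

/-- The element `a + b·𝐣` of `B`. -/
def mk' (ρ : E →+* E) (J : E) (a b : E) : Qa ρ J := (a, b)

/-- The `E`-component of `a + b·𝐣`. -/
def re (x : Qa ρ J) : E := Prod.fst x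

/-- The `𝐣`-coefficient of `a + b·𝐣`. -/
def im (x : Qa ρ J) : E := Prod.snd x

instance : One (Qa ρ J) := ⟨mk' ρ J 1 0⟩

/-- Multiplication: `(a + b𝐣)(c + d𝐣) = (ac + J·b·ρ(d)) + (ad + b·ρ(c))·𝐣`. -/
instance : Mul (Qa ρ J) :=
  ⟨fun x y => mk' ρ J (re x * re y + J * (im x * ρ (im y))) (re x * im y + im x * ρ (re y))⟩

/-- The main involution `(a + b𝐣)^* = ρ(a) - b𝐣` of `B`. -/
def conj (x : Qa ρ J) : Qa ρ J := mk' ρ J (ρ (re x)) (-im x)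

/-- The embedding `E → B`. -/
def scalar (ρ : E →+* E) (J : E) (c : E) : Qa ρ J := mk' ρ J c 0

/-- The element `𝐣 ∈ B`. -/
def jay (ρ : E →+* E) (J : E) : Qa ρ J := mk' ρ J 0 1

end Qa


/-- The right action of `B = E ⊕ E𝐣` on `Ṽ = ⋀²V`, where `E` acts by scalars and `x·𝐣 = L(x)`
(so `x·(a + b𝐣) = a•x + ρ(b)•L(x)`). -/
def actB {E : Type*} [Field E] (ρ : E →+* E) (J : E) {M : Type*} [AddCommGroup M] [Module E M]
    (L : M → M) (x : M) (q : Qa ρ J) : M :=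
  Qa.re q • x + ρ (Qa.im q) • L x

/-- The `B`-valued form `⟨x,y⟩ = (x,y) - J⁻¹·𝐣·(L(x),y)` on `Ṽ`, where `(x,y) = 𝐢·h₂(x,y)`. -/
noncomputable def qform {E : Type*} [Field E] (ρ : E →+* E) (J : E) (i0 : E)
    {M : Type*} [AddCommGroup M] [Module E M] (h₂ : M → M → E) (L : M → M)
    (x y : M) : Qa ρ J :=
  Qa.scalar ρ J (i0 * h₂ x y) -
    Qa.scalar ρ J J⁻¹ * Qa.jay ρ J * Qa.scalar ρ J (i0 * h₂ (L x) y)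

/-! `Λg` is `exteriorPower.map 2 g`. Functoriality of `⋀⁴` makes it scale the wedge pairing
`⋀²V × ⋀²V → ⋀⁴V ≅ E` by `det g = ν²`, and it scales `h₂` by `ν²` because the values of `h₂`
on wedges are `2 × 2` Gram determinants of `H`. As `dim V = 4` the wedge pairing is perfect, and
`L` is the adjoint of `h₂` for it, so a map scaling both pairings by the same factor commutes
with `L`; `B`-linearity and the scaling of `⟨ , ⟩` follow.

If `⋀²g = id`, then `g u ∧ u ∧ w = g u ∧ g u ∧ g w = 0` for all `w`, so by perfectness of the
pairing `g u ∧ u = 0`: `g` preserves every line, hence is a scalar `a`, and `a² = 1`. -/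

theorem wedgeι_eq_ιMulti_s7 (E : Type*) [CommRing E] {V : Type*} [AddCommGroup V] [Module E V]
    (n : ℕ) (v : Fin n → V) : wedgeι E n v = exteriorPower.ιMulti E n v := rfl

namespace exteriorPower

open Module Set.powersetCard

section CommRing

variable {R M N : Type*} [CommRing R] [AddCommGroup M] [Module R M] [AddCommGroup N] [Module R N]

theorem coe_map {n : ℕ} (f : M →ₗ[R] N) (x : ⋀[R]^n M) :
    (map n f x : ExteriorAlgebra R N) = ExteriorAlgebra.map f x := by
  suffices (⋀[R]^n N).subtype ∘ₗ map n f =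
      (ExteriorAlgebra.map f).toLinearMap ∘ₗ (⋀[R]^n M).subtype from
    LinearMap.congr_fun this x
  refine linearMap_ext (AlternatingMap.ext fun v => ?_)
  simp

theorem eq_map_of_apply_ιMulti {n : ℕ} {f : M →ₗ[R] N} {Λ : ⋀[R]^n M →ₗ[R] ⋀[R]^n N}
    (hΛ : ∀ v, Λ (ιMulti R n v) = ιMulti R n (f ∘ v)) : Λ = map n f :=
  linearMap_ext (AlternatingMap.ext fun v => by
    rw [LinearMap.compAlternatingMap_apply, LinearMap.compAlternatingMap_apply, hΛ,
      map_apply_ιMulti])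

theorem map_smul_one (n : ℕ) (a : R) :
    map n (a • 1 : Module.End R M) = a ^ n • LinearMap.id := by
  refine linearMap_ext (AlternatingMap.ext fun v => ?_)
  have := (ιMulti R n).map_smul_univ (fun _ => a) v
  simp only [Finset.prod_const, Finset.card_univ, Fintype.card_fin] at this
  simpa [Function.comp_def] using this

theorem ιMulti_comp_eq_det_smul {n : ℕ} (b : Basis (Fin n) R M) (f : M →ₗ[R] M)
    (v : Fin n → M) : ιMulti R n (f ∘ v) = LinearMap.det f • ιMulti R n v := by
  have : Module.Free R M := .of_basis b
  rw [← sub_eq_zero, ← forall_dual_apply_eq_zero_iff R]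
  intro φ
  have hφ := (φ.compAlternatingMap (ιMulti R n)).eq_smul_basis_det b
  have key : ∀ w, φ (ιMulti R n w) = φ (ιMulti R n b) * b.det w := fun w => by
    conv_lhs => rw [← LinearMap.compAlternatingMap_apply, hφ]
    rfl
  rw [map_sub, map_smul, key (f ∘ v), key v, b.det_comp, smul_eq_mul]
  ring

theorem map_eq_det_smul {n : ℕ} (b : Basis (Fin n) R M) (f : M →ₗ[R] M) (x : ⋀[R]^n M) :
    map n f x = LinearMap.det f • x := by
  suffices map n f = LinearMap.det f • LinearMap.id from LinearMap.congr_fun this x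
  refine linearMap_ext (AlternatingMap.ext fun v => ?_)
  rw [LinearMap.compAlternatingMap_apply, LinearMap.compAlternatingMap_apply, map_apply_ιMulti,
    ιMulti_comp_eq_det_smul b]
  rfl

theorem wedgeMul_map (f : M →ₗ[R] M) (x y : ⋀[R]^2 M) :
    wedgeMul R (map 2 f x) (map 2 f y) = map 4 f (wedgeMul R x y) :=
  Subtype.ext (by simp only [wedgeMul, coe_map, map_mul])

theorem wedgeMul_sub_left (x x' y : ⋀[R]^2 M) :
    wedgeMul R (x - x') y = wedgeMul R x y - wedgeMul R x' y :=
  Subtype.ext (sub_mul _ _ _)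

end CommRing

variable {K V : Type*} [Field K] [AddCommGroup V] [Module K V]

theorem ιMulti_ne_zero_of_linearIndependent {n : ℕ} {v : Fin n → V}
    (hv : LinearIndependent K v) : ιMulti K n v ≠ 0 := by
  simpa [ιMulti_family] using
    (ιMulti_family_linearIndependent_field (n := n) hv).ne_zero (ofFinEmbEquiv (.refl _))

variable [FiniteDimensional K V]

/-- Complementary basis wedges `e_s`, `e_sᶜ` multiply to a basis vector of the top power, while
`e_s' * e_sᶜ = 0` for `s' ≠ s`; so `z * e_sᶜ` isolates the `s`-coordinate of `z`. -/
theorem eq_zero_of_forall_mul_ιMulti_eq_zero {k m : ℕ} (hkm : m + k = finrank K V)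
    {z : ⋀[K]^k V}
    (hz : ∀ w : Fin m → V, (z : ExteriorAlgebra K V) * ExteriorAlgebra.ιMulti K m w = 0) :
    z = 0 := by
  classical
  let b := Module.finBasis K V
  let B := b.exteriorPower k
  refine B.ext_elem fun s => ?_
  rw [map_zero, Finsupp.zero_apply]
  let t : Set.powersetCard (Fin (finrank K V)) m := compl (by simpa using hkm) s
  have hst : Disjoint s.val t.val := disjoint_compl_right
  have hexp : (z : ExteriorAlgebra K V) * ExteriorAlgebra.ιMulti_family K m b t =
      B.repr z s •
        (ExteriorAlgebra.ιMulti_family K k b s * ExteriorAlgebra.ιMulti_family K m b t) := by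
    conv_lhs => rw [← B.sum_repr z]
    rw [Submodule.coe_sum, Finset.sum_mul, Finset.sum_eq_single s]
    · simp [B]
    · intro s' _ hs'
      rw [Submodule.coe_smul, smul_mul_assoc, basis_apply, ιMulti_family_apply_coe,
        ExteriorAlgebra.ιMulti_family_mul_of_not_disjoint, smul_zero]
      exact fun h => hs' (eq_iff_subset.2 (disjoint_compl_right_iff.1 h))
    · simp
  have hne :
      ExteriorAlgebra.ιMulti_family K k b s * ExteriorAlgebra.ιMulti_family K m b t ≠ 0 := by
    rw [ExteriorAlgebra.ιMulti_family_mul_of_disjoint _ _ _ _ hst, smul_ne_zero_iff_ne,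
      ← ιMulti_family_apply_coe, ← basis_apply, ne_eq, ZeroMemClass.coe_eq_zero]
    exact (b.exteriorPower (k + m)).ne_zero _
  exact (smul_eq_zero.1 (hexp ▸ hz _)).resolve_right hne

theorem eq_zero_of_forall_wedgeMul_eq_zero (hV : finrank K V = 4) {z : ⋀[K]^2 V}
    (hz : ∀ y, wedgeMul K z y = 0) : z = 0 :=
  eq_zero_of_forall_mul_ιMulti_eq_zero (m := 2) hV.symm fun w =>
    congrArg Subtype.val (hz (ιMulti K 2 w))

theorem not_linearIndependent_of_map_two_eq_id (hV : 3 ≤ finrank K V) {g : V →ₗ[K] V}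
    (hg : map 2 g = LinearMap.id) (u : V) : ¬ LinearIndependent K ![u, g u] := by
  have hι : ∀ w, ExteriorAlgebra.ι K (g u) * ExteriorAlgebra.ι K (g w) =
      ExteriorAlgebra.ι K u * ExteriorAlgebra.ι K w := fun w => by
    have := congrArg Subtype.val (LinearMap.congr_fun hg (ιMulti K 2 ![u, w]))
    simpa [ExteriorAlgebra.ιMulti_apply, List.ofFn_succ, Matrix.vecTail] using this
  intro hu
  apply ιMulti_ne_zero_of_linearIndependent (LinearIndependent.pair_symm_iff.1 hu)
  obtain ⟨m, hm⟩ : ∃ m, m + 1 + 2 = finrank K V := ⟨finrank K V - 3, by omega⟩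
  refine eq_zero_of_forall_mul_ιMulti_eq_zero hm fun w => ?_
  calc (ιMulti K 2 ![g u, u] : ExteriorAlgebra K V) * ExteriorAlgebra.ιMulti K (m + 1) w
      = ExteriorAlgebra.ι K (g u) * (ExteriorAlgebra.ι K u * ExteriorAlgebra.ι K (w 0)) *
          ExteriorAlgebra.ιMulti K m (Matrix.vecTail w) := by
        simp [ExteriorAlgebra.ιMulti_apply, mul_assoc]
    _ = 0 := by
        rw [← hι, ← mul_assoc, ExteriorAlgebra.ι_sq_zero, zero_mul, zero_mul]

theorem map_two_eq_id_iff (hV : 3 ≤ finrank K V) {g : V →ₗ[K] V} :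
    map 2 g = LinearMap.id ↔ g = 1 ∨ g = -1 := by
  constructor
  · intro hg
    obtain ⟨a, rfl⟩ := LinearMap.exists_eq_smul_id_of_forall_notLinearIndependent
      (not_linearIndependent_of_map_two_eq_id hV hg)
    have : Nontrivial (⋀[K]^2 V) := Module.nontrivial_of_finrank_pos (by
      rw [finrank_eq]; exact Nat.choose_pos (by omega))
    obtain ⟨x, hx⟩ := exists_ne (0 : ⋀[K]^2 V)
    have ha : a ^ 2 = 1 := smul_left_injective K hx (by
      simpa [map_smul_one] using LinearMap.congr_fun hg x)
    rcases sq_eq_one_iff.1 ha with rfl | rfl <;> simp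
  · rintro (rfl | rfl)
    · simpa using map_smul_one (M := V) 2 (1 : K)
    · simpa using map_smul_one (M := V) 2 (-1 : K)

theorem commute_of_similitude (hV : finrank K V = 4) {d : ⋀[K]^4 V ≃ₗ[K] K}
    {h₂ : ⋀[K]^2 V → ⋀[K]^2 V → K} {L : ⋀[K]^2 V → ⋀[K]^2 V}
    (L_def : ∀ x y, d (wedgeMul K (L x) y) = h₂ x y) {Λ : ⋀[K]^2 V →ₗ[K] ⋀[K]^2 V}
    (hΛ : Function.Surjective Λ) {c : K}
    (hd : ∀ x y, d (wedgeMul K (Λ x) (Λ y)) = c * d (wedgeMul K x y))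
    (hh : ∀ x y, h₂ (Λ x) (Λ y) = c * h₂ x y) (x : ⋀[K]^2 V) :
    Λ (L x) = L (Λ x) := by
  rw [← sub_eq_zero]
  refine eq_zero_of_forall_wedgeMul_eq_zero hV fun y => ?_
  obtain ⟨y, rfl⟩ := hΛ y
  apply d.injective
  rw [wedgeMul_sub_left, map_sub, map_zero, hd, L_def, L_def, hh, sub_self]

end exteriorPower

namespace IsDetForm

open exteriorPower

variable {E V : Type*} [Field E] {ρ : E →+* E} [AddCommGroup V] [Module E V] {H : V → V → E}
  {r : ℕ} {h : ⋀[E]^r V → ⋀[E]^r V → E}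

def toLinearMap (hh : IsDetForm ρ H r h) : ⋀[E]^r V →ₛₗ[ρ] ⋀[E]^r V →ₗ[E] E :=
  LinearMap.mk₂'ₛₗ ρ (RingHom.id E) h hh.1
    (fun c x y => by simpa using hh.2.2.1 c 1 x y) hh.2.1
    (fun c x y => by simpa [mul_comm] using hh.2.2.1 1 c x y)

theorem map_apply_map (hh : IsDetForm ρ H r h) {f : V →ₗ[E] V} {c : E}
    (hf : ∀ x y, H (f x) (f y) = c * H x y) (x y : ⋀[E]^r V) :
    h (map r f x) (map r f y) = c ^ r * h x y := by
  suffices (hh.toLinearMap.comp (map r f)).compl₂ (map r f) = c ^ r • hh.toLinearMap from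
    LinearMap.congr_fun₂ this x y
  refine LinearMap.ext_on_range (ιMulti_span E r V) fun v =>
    LinearMap.ext_on_range (ιMulti_span E r V) fun w => ?_
  have hdet : ∀ v w : Fin r → V,
      h (ιMulti E r v) (ιMulti E r w) = (Matrix.of fun i j => H (v i) (w j)).det :=
    hh.2.2.2.2
  have hM : (Matrix.of fun i j => H (f (v i)) (f (w j))) =
      c • Matrix.of fun i j => H (v i) (w j) := by
    ext i j
    exact hf (v i) (w j)
  simp only [LinearMap.compl₂_apply, LinearMap.comp_apply, LinearMap.smul_apply, toLinearMap,
    LinearMap.mk₂'ₛₗ_apply, map_apply_ιMulti, hdet, Function.comp_apply, hM, Matrix.det_smul,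
    Fintype.card_fin, smul_eq_mul]

end IsDetForm

namespace Qa

variable {E : Type*} [Field E] {ρ : E →+* E} {J : E}

@[simp] theorem re_mk' (a b : E) : re (mk' ρ J a b) = a := rfl
@[simp] theorem im_mk' (a b : E) : im (mk' ρ J a b) = b := rfl
@[simp] theorem re_sub (x y : Qa ρ J) : re (x - y) = re x - re y := rfl
@[simp] theorem im_sub (x y : Qa ρ J) : im (x - y) = im x - im y := rfl
@[simp] theorem re_mul (x y : Qa ρ J) : re (x * y) = re x * re y + J * (im x * ρ (im y)) := rfl
@[simp] theorem im_mul (x y : Qa ρ J) : im (x * y) = re x * im y + im x * ρ (re y) := rfl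
@[simp] theorem re_scalar (c : E) : re (scalar ρ J c) = c := rfl
@[simp] theorem im_scalar (c : E) : im (scalar ρ J c) = 0 := rfl
@[simp] theorem re_jay : re (jay ρ J) = 0 := rfl
@[simp] theorem im_jay : im (jay ρ J) = 1 := rfl

theorem ext {x y : Qa ρ J} (hre : re x = re y) (him : im x = im y) : x = y := Prod.ext hre him

theorem scalar_mul_mk' (c a b : E) : scalar ρ J c * mk' ρ J a b = mk' ρ J (c * a) (c * b) :=
  ext (by simp) (by simp)

end Qa

section Similitude

variable {E M : Type*} [Field E] {ρ : E →+* E} {J : E} [AddCommGroup M] [Module E M]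
  {L : M → M} {Λ : M →ₗ[E] M}

theorem map_actB (hL : ∀ x, Λ (L x) = L (Λ x)) (x : M) (q : Qa ρ J) :
    Λ (actB ρ J L x q) = actB ρ J L (Λ x) q := by
  simp only [actB, map_add, map_smul, hL]

theorem qform_eq_mk' (i0 : E) (h₂ : M → M → E) (x y : M) :
    qform ρ J i0 h₂ L x y = Qa.mk' ρ J (i0 * h₂ x y) (-(J⁻¹ * ρ (i0 * h₂ (L x) y))) :=
  Qa.ext (by simp [qform]) (by simp [qform])

theorem qform_apply_of_similitude {i0 : E} {h₂ : M → M → E} {c : E} (hc : ρ c = c)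
    (hL : ∀ x, Λ (L x) = L (Λ x)) (hh : ∀ x y, h₂ (Λ x) (Λ y) = c * h₂ x y) (x y : M) :
    qform ρ J i0 h₂ L (Λ x) (Λ y) = Qa.scalar ρ J c * qform ρ J i0 h₂ L x y := by
  rw [qform_eq_mk', qform_eq_mk', ← hL, hh, hh, Qa.scalar_mul_mk', map_mul, map_mul, map_mul, hc]
  congr 1 <;> ring

end Similitude

theorem exterior_square_on_GSU_general
    {F E : Type*} [Field F] [Field E] [Algebra F E]
    (ρ : E →+* E)
    (hρ_fixF : ∀ c : F, ρ (algebraMap F E c) = algebraMap F E c)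
    {V : Type*} [AddCommGroup V] [Module E V] [FiniteDimensional E V]
    (hV4 : Module.finrank E V = 4)
    (H : V → V → E)
    (d : (⋀[E]^4 V) ≃ₗ[E] E)
    (h₂ : (⋀[E]^2 V) → (⋀[E]^2 V) → E) (hh₂ : IsDetForm ρ H 2 h₂)
    (L : (⋀[E]^2 V) → (⋀[E]^2 V))
    (L_def : ∀ x y : ⋀[E]^2 V, d (wedgeMul E (L x) y) = h₂ x y)
    (J : F)
    (i0 : E) :
    ∀ (g : V ≃ₗ[E] V) (ν : F), ν ≠ 0 →
      (∀ x y, H (g x) (g y) = algebraMap F E ν * H x y) →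
      LinearMap.det (g : V →ₗ[E] V) = algebraMap F E ν ^ 2 →
      ∀ Λg : (⋀[E]^2 V) →ₗ[E] (⋀[E]^2 V),
        (∀ v : Fin 2 → V, Λg (wedgeι E 2 v) = wedgeι E 2 (⇑g ∘ v)) →
        (∀ x, Λg (L x) = L (Λg x)) ∧
        (∀ (x : ⋀[E]^2 V) (q : Qa ρ (algebraMap F E J)),
          Λg (actB ρ (algebraMap F E J) L x q) = actB ρ (algebraMap F E J) L (Λg x) q) ∧
        Function.Bijective Λg ∧
        (∀ x y : ⋀[E]^2 V,
          qform ρ (algebraMap F E J) i0 h₂ L (Λg x) (Λg y) =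
            Qa.scalar ρ (algebraMap F E J) (algebraMap F E ν ^ 2) *
              qform ρ (algebraMap F E J) i0 h₂ L x y) ∧
        (∀ (g' : V ≃ₗ[E] V) (ν' : F), ν' ≠ 0 →
          (∀ x y, H (g' x) (g' y) = algebraMap F E ν' * H x y) →
          LinearMap.det (g' : V →ₗ[E] V) = algebraMap F E ν' ^ 2 →
          ∀ Λg' Λgg' : (⋀[E]^2 V) →ₗ[E] (⋀[E]^2 V),
            (∀ v : Fin 2 → V, Λg' (wedgeι E 2 v) = wedgeι E 2 (⇑g' ∘ v)) →
            (∀ v : Fin 2 → V, Λgg' (wedgeι E 2 v) = wedgeι E 2 (⇑g ∘ ⇑g' ∘ v)) →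
            ∀ x, Λgg' x = Λg (Λg' x)) ∧
        ((∀ x, Λg x = x) ↔ ((∀ u, g u = u) ∨ (∀ u, g u = -u))) := by
  intro g ν _ hgH hdet Λg hΛ
  obtain rfl : Λg = exteriorPower.map 2 (g : V →ₗ[E] V) :=
    exteriorPower.eq_map_of_apply_ιMulti hΛ
  have hbij : Function.Bijective (exteriorPower.map 2 (g : V →ₗ[E] V)) :=
    ⟨exteriorPower.map_injective_field g.injective, exteriorPower.map_surjective g.surjective⟩
  have hh := hh₂.map_apply_map hgH
  have hd : ∀ x y, d (wedgeMul E (exteriorPower.map 2 (g : V →ₗ[E] V) x)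
      (exteriorPower.map 2 (g : V →ₗ[E] V) y)) = algebraMap F E ν ^ 2 * d (wedgeMul E x y) :=
    fun x y => by
      rw [exteriorPower.wedgeMul_map,
        exteriorPower.map_eq_det_smul (Module.finBasisOfFinrankEq E V hV4), hdet, map_smul,
        smul_eq_mul]
  have hL := exteriorPower.commute_of_similitude hV4 L_def hbij.2 hd hh
  have hν : ρ (algebraMap F E ν ^ 2) = algebraMap F E ν ^ 2 := by rw [map_pow, hρ_fixF]
  refine ⟨hL, map_actB hL, hbij, qform_apply_of_similitude hν hL hh, ?_, ?_⟩
  · intro g' _ _ _ _ Λg' Λgg' hΛ' hΛgg' x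
    have hcomp : Λgg' = exteriorPower.map 2 ((g : V →ₗ[E] V) ∘ₗ g') :=
      exteriorPower.eq_map_of_apply_ιMulti fun v => by rw [← wedgeι_eq_ιMulti_s7, hΛgg']; rfl
    rw [hcomp, exteriorPower.eq_map_of_apply_ιMulti hΛ', exteriorPower.map_comp,
      LinearMap.comp_apply]
  · simpa [LinearMap.ext_iff] using
      exteriorPower.map_two_eq_id_iff (g := (g : V →ₗ[E] V)) (by omega)

/-- Let `GSU(V,H) = {g ∈ GU(V,H) : det g = ν(g)²}`. For `g ∈ GSU(V,H)`, the
map `⋀²g` commutes with `L`, hence is a right-`B`-linear automorphism of `Ṽ = ⋀²V`, and scales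
the `B`-skew-hermitian form by `ν(g)²`. The map `g ↦ ⋀²g` is a group homomorphism
`GSU(V,H) → GU_B(Ṽ)` whose kernel is `{±id}`. -/
theorem exterior_square_on_GSU
    {F E : Type*} [Field F] [CharZero F] [Field E] [Algebra F E]
    (hquad : Module.finrank F E = 2)
    (ρ : E →+* E) (hρ_invol : ∀ a, ρ (ρ a) = a) (hρ_ne : ρ ≠ RingHom.id E)
    (hρ_fixF : ∀ c : F, ρ (algebraMap F E c) = algebraMap F E c)
    (hρ_fixed_field : ∀ a : E, ρ a = a → ∃ c : F, algebraMap F E c = a)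
    {V : Type*} [AddCommGroup V] [Module E V] [FiniteDimensional E V]
    (hV4 : Module.finrank E V = 4)
    (H : V → V → E)
    (H_add_left : ∀ x y z, H (x + y) z = H x z + H y z)
    (H_add_right : ∀ x y z, H x (y + z) = H x y + H x z)
    (H_smul : ∀ (a b : E) (x y : V), H (a • x) (b • y) = ρ a * H x y * b)
    (H_conj : ∀ x y, H x y = ρ (H y x))
    (H_nondeg : ∀ x, (∀ y, H x y = 0) → x = 0)
    (d : (⋀[E]^4 V) ≃ₗ[E] E)
    (h₂ : (⋀[E]^2 V) → (⋀[E]^2 V) → E) (hh₂ : IsDetForm ρ H 2 h₂)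
    (L : (⋀[E]^2 V) → (⋀[E]^2 V))
    (L_add : ∀ x y, L (x + y) = L x + L y)
    (L_smul : ∀ (a : E) (x : ⋀[E]^2 V), L (a • x) = ρ a • L x)
    (L_def : ∀ x y : ⋀[E]^2 V, d (wedgeMul E (L x) y) = h₂ x y)
    (J : F) (hJ0 : J ≠ 0)
    (hLL : ∀ x : ⋀[E]^2 V, L (L x) = algebraMap F E J • x)
    (i0 : E) (hi0_ne : i0 ≠ 0) (hi0_trace : ρ i0 = -i0) :
    ∀ (g : V ≃ₗ[E] V) (ν : F), ν ≠ 0 →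
      (∀ x y, H (g x) (g y) = algebraMap F E ν * H x y) →
      LinearMap.det (g : V →ₗ[E] V) = algebraMap F E ν ^ 2 →
      ∀ Λg : (⋀[E]^2 V) →ₗ[E] (⋀[E]^2 V),
        (∀ v : Fin 2 → V, Λg (wedgeι E 2 v) = wedgeι E 2 (⇑g ∘ v)) →
        (∀ x, Λg (L x) = L (Λg x)) ∧
        (∀ (x : ⋀[E]^2 V) (q : Qa ρ (algebraMap F E J)),
          Λg (actB ρ (algebraMap F E J) L x q) = actB ρ (algebraMap F E J) L (Λg x) q) ∧
        Function.Bijective Λg ∧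
        (∀ x y : ⋀[E]^2 V,
          qform ρ (algebraMap F E J) i0 h₂ L (Λg x) (Λg y) =
            Qa.scalar ρ (algebraMap F E J) (algebraMap F E ν ^ 2) *
              qform ρ (algebraMap F E J) i0 h₂ L x y) ∧
        (∀ (g' : V ≃ₗ[E] V) (ν' : F), ν' ≠ 0 →
          (∀ x y, H (g' x) (g' y) = algebraMap F E ν' * H x y) →
          LinearMap.det (g' : V →ₗ[E] V) = algebraMap F E ν' ^ 2 →
          ∀ Λg' Λgg' : (⋀[E]^2 V) →ₗ[E] (⋀[E]^2 V),
            (∀ v : Fin 2 → V, Λg' (wedgeι E 2 v) = wedgeι E 2 (⇑g' ∘ v)) →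
            (∀ v : Fin 2 → V, Λgg' (wedgeι E 2 v) = wedgeι E 2 (⇑g ∘ ⇑g' ∘ v)) →
            ∀ x, Λgg' x = Λg (Λg' x)) ∧
        ((∀ x, Λg x = x) ↔ ((∀ u, g u = u) ∨ (∀ u, g u = -u))) :=
  exterior_square_on_GSU_general ρ hρ_fixF hV4 H d h₂ hh₂ L L_def J i0
end

section
/- Let (V₁, H₁) be a 2-dimensional hermitian space over E, fix an E-linear isomorphism d₁ : ⋀²V₁ → E, and set L₁ := ψ₁^{-1} ∘ φ₁, where φ₁(x)(y) = H₁(x,y) and ψ₁(x)(y) = d₁(x∧y). Then L₁ ∘ L₁ = J₁ · id where J₁ := −vol(H₁,d₁) ∈ F^×, and for all x, y ∈ V₁: H₁(L₁(x), y) = −H₁(L₁(y), x) and ρ(H₁(L₁(x), L₁(y))) = −J₁·H₁(x,y). -/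
section wedgeAuxL

variable {E : Type*} [Field E] {V : Type*} [AddCommGroup V] [Module E V]

private lemma updL0 (x y z : V) : Function.update ![x, y] 0 z = ![z, y] := by
  ext i; fin_cases i <;> simp

private lemma updL1 (x y z : V) : Function.update ![x, y] 1 z = ![x, z] := by
  ext i; fin_cases i <;> simp

private lemma wedgeL_add_left (x x' y : V) :
    wedgeι E 2 ![x + x', y] = wedgeι E 2 ![x, y] + wedgeι E 2 ![x', y] := by
  apply Subtype.ext
  have h := (ExteriorAlgebra.ιMulti E 2 (M := V)).map_update_add ![x, y] 0 x x'
  simpa [updL0, wedgeι] using h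

private lemma wedgeL_add_right (x y y' : V) :
    wedgeι E 2 ![x, y + y'] = wedgeι E 2 ![x, y] + wedgeι E 2 ![x, y'] := by
  apply Subtype.ext
  have h := (ExteriorAlgebra.ιMulti E 2 (M := V)).map_update_add ![x, y] 1 y y'
  simpa [updL1, wedgeι] using h

private lemma wedgeL_smul_left (a : E) (x y : V) :
    wedgeι E 2 ![a • x, y] = a • wedgeι E 2 ![x, y] := by
  apply Subtype.ext
  have h := (ExteriorAlgebra.ιMulti E 2 (M := V)).map_update_smul ![x, y] 0 a x
  simpa [updL0, wedgeι] using h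

private lemma wedgeL_self (x : V) : wedgeι E 2 ![x, x] = 0 := by
  apply Subtype.ext
  have h := (ExteriorAlgebra.ιMulti E 2 (M := V)).map_eq_zero_of_eq ![x, x]
    (i := 0) (j := 1) (by simp) (by decide)
  simpa [wedgeι] using h

private lemma wedgeL_swap (x y : V) : wedgeι E 2 ![y, x] = - wedgeι E 2 ![x, y] := by
  have h := wedgeL_self (E := E) (x + y)
  have h2 : wedgeι E 2 ![x + y, x + y]
      = wedgeι E 2 ![x, x] + wedgeι E 2 ![x, y] + wedgeι E 2 ![y, x]
        + wedgeι E 2 ![y, y] := by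
    rw [wedgeL_add_left, wedgeL_add_right, wedgeL_add_right]; abel
  rw [h2, wedgeL_self, wedgeL_self] at h
  linear_combination (norm := abel) h

private lemma wedgeL_zero_left (y : V) : wedgeι E 2 ![(0 : V), y] = 0 := by
  apply Subtype.ext
  have h := (ExteriorAlgebra.ιMulti E 2 (M := V)).map_coord_zero (m := ![(0:V), y]) 0 (by simp)
  simpa [wedgeι] using h

private lemma pluecker' [FiniteDimensional E V] (hV2 : Module.finrank E V = 2) (B : V → V → E)
    (Badd_l : ∀ x x' y, B (x + x') y = B x y + B x' y)
    (Badd_r : ∀ x y y', B x (y + y') = B x y + B x y')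
    (Bsmul_l : ∀ (a : E) (x y : V), B (a • x) y = a * B x y)
    (Bsmul_r : ∀ (a : E) (x y : V), B x (a • y) = a * B x y)
    (Bself : ∀ x, B x x = 0) :
    ∀ x1 x2 x3 x4 : V, B x1 x3 * B x2 x4 - B x1 x4 * B x2 x3 = B x1 x2 * B x3 x4 := by
  have Bswap : ∀ x y, B y x = - B x y := by
    intro x y
    have h := Bself (x + y)
    rw [Badd_l, Badd_r, Badd_r, Bself, Bself] at h
    linear_combination h
  let b := Module.finBasisOfFinrankEq E V hV2
  have expand : ∀ u v : V, B u v =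
      (b.repr u 0 * b.repr v 1 - b.repr u 1 * b.repr v 0) * B (b 0) (b 1) := by
    intro u v
    conv_lhs => rw [← b.sum_repr u, ← b.sum_repr v]
    rw [Fin.sum_univ_two, Fin.sum_univ_two]
    simp only [Badd_l, Badd_r, Bsmul_l, Bsmul_r, Bself]
    rw [Bswap (b 0) (b 1)]
    ring
  intro x1 x2 x3 x4
  rw [expand x1 x3, expand x2 x4, expand x1 x4, expand x2 x3, expand x1 x2, expand x3 x4]
  ring

end wedgeAuxL

/-- For a 2-dimensional hermitian space `(V₁,H₁)` over `E` with trivialization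
`d₁ : ⋀²V₁ ≅ E`, the semilinear map `L₁ = ψ₁⁻¹ ∘ φ₁` (characterized by
`d₁(L₁(x) ∧ y) = H₁(x,y)`) satisfies `L₁ ∘ L₁ = J₁ · id` with `J₁ = -vol(H₁,d₁) ∈ F^×`, and

`H₁(L₁x, y) = -H₁(L₁y, x)` and `ρ(H₁(L₁x, L₁y)) = -J₁·H₁(x,y)` for all `x, y`. -/
theorem L_two_dimensional
    {F E : Type*} [Field F] [CharZero F] [Field E] [Algebra F E]
    (hquad : Module.finrank F E = 2)
    (ρ : E →+* E) (hρ_invol : ∀ a, ρ (ρ a) = a) (hρ_ne : ρ ≠ RingHom.id E)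
    (hρ_fixF : ∀ c : F, ρ (algebraMap F E c) = algebraMap F E c)
    (hρ_fixed_field : ∀ a : E, ρ a = a → ∃ c : F, algebraMap F E c = a)
    {V₁ : Type*} [AddCommGroup V₁] [Module E V₁] [FiniteDimensional E V₁]
    (hV2 : Module.finrank E V₁ = 2)
    (H₁ : V₁ → V₁ → E)
    (H_add_left : ∀ x y z, H₁ (x + y) z = H₁ x z + H₁ y z)
    (H_add_right : ∀ x y z, H₁ x (y + z) = H₁ x y + H₁ x z)
    (H_smul : ∀ (a b : E) (x y : V₁), H₁ (a • x) (b • y) = ρ a * H₁ x y * b)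
    (H_conj : ∀ x y, H₁ x y = ρ (H₁ y x))
    (H_nondeg : ∀ x, (∀ y, H₁ x y = 0) → x = 0)
    (d₁ : (⋀[E]^2 V₁) ≃ₗ[E] E)
    (hvol : (⋀[E]^2 V₁) → (⋀[E]^2 V₁) → E) (hhvol : IsDetForm ρ H₁ 2 hvol)
    (L₁ : V₁ → V₁)
    (L_add : ∀ x y, L₁ (x + y) = L₁ x + L₁ y)
    (L_smul : ∀ (a : E) (x : V₁), L₁ (a • x) = ρ a • L₁ x)
    (L_def : ∀ x y : V₁, d₁ (wedgeι E 2 ![L₁ x, y]) = H₁ x y) :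
    (∃ c : F, c ≠ 0 ∧ algebraMap F E c = -(hvol (d₁.symm 1) (d₁.symm 1))) ∧
    (∀ x : V₁, L₁ (L₁ x) = -(hvol (d₁.symm 1) (d₁.symm 1)) • x) ∧
    (∀ x y : V₁, H₁ (L₁ x) y = -(H₁ (L₁ y) x)) ∧
    (∀ x y : V₁,
      ρ (H₁ (L₁ x) (L₁ y)) = -(-(hvol (d₁.symm 1) (d₁.symm 1))) * H₁ x y) := by
  classical
  obtain ⟨hv_addl, hv_addr, hv_smul, hv_conj, hv_det⟩ := hhvol
  set ω : ⋀[E]^2 V₁ := d₁.symm 1 with hω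
  set vol : E := hvol ω ω with hvol_def
  set B : V₁ → V₁ → E := fun x y => d₁ (wedgeι E 2 ![x, y]) with hB
  have Badd_l : ∀ x x' y, B (x + x') y = B x y + B x' y := by
    intro x x' y; simp only [hB]; rw [wedgeL_add_left, LinearEquiv.map_add]
  have Badd_r : ∀ x y y', B x (y + y') = B x y + B x y' := by
    intro x y y'; simp only [hB]; rw [wedgeL_add_right, LinearEquiv.map_add]
  have Bsmul_l : ∀ (a : E) (x y : V₁), B (a • x) y = a * B x y := by
    intro a x y; simp only [hB]; rw [wedgeL_smul_left, LinearEquiv.map_smul, smul_eq_mul]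
  have Bself : ∀ x, B x x = 0 := by
    intro x; simp only [hB]; rw [wedgeL_self, LinearEquiv.map_zero]
  have Bswap : ∀ x y, B y x = - B x y := by
    intro x y
    have h := Bself (x + y)
    rw [Badd_l, Badd_r, Badd_r, Bself, Bself] at h
    linear_combination h
  have Bsmul_r : ∀ (a : E) (x y : V₁), B x (a • y) = a * B x y := by
    intro a x y
    rw [Bswap (a • y) x, Bswap y x, Bsmul_l]
    ring
  have BL : ∀ x y, B (L₁ x) y = H₁ x y := by
    intro x y; simp only [hB]; exact L_def x y
  have hxω : ∀ x : ⋀[E]^2 V₁, x = d₁ x • ω := by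
    intro x
    rw [hω, ← LinearEquiv.map_smul, smul_eq_mul, mul_one, LinearEquiv.symm_apply_apply]
  have hvolρ : ∀ x y : ⋀[E]^2 V₁, hvol x y = ρ (d₁ x) * vol * d₁ y := by
    intro x y
    conv_lhs => rw [hxω x, hxω y]
    rw [hv_smul]
  have keyE : ∀ u₁ u₂ w₁ w₂ : V₁, ρ (B u₁ u₂) * vol * B w₁ w₂
      = H₁ u₁ w₁ * H₁ u₂ w₂ - H₁ u₁ w₂ * H₁ u₂ w₁ := by
    intro u₁ u₂ w₁ w₂
    have h := hv_det ![u₁, u₂] ![w₁, w₂]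
    rw [hvolρ] at h
    simpa [Matrix.det_fin_two, hB] using h
  -- basic properties of L₁
  have L0 : L₁ 0 = 0 := by
    have := L_smul 0 0
    simpa using this
  have Lneg : ∀ x, L₁ (-x) = - L₁ x := by
    intro x
    have := L_smul (-1) x
    simpa using this
  have L_inj : Function.Injective L₁ := by
    intro x y hxy
    have hz : L₁ (x - y) = 0 := by
      rw [sub_eq_add_neg, L_add, Lneg, hxy, add_neg_cancel]
    have hH : ∀ w, H₁ (x - y) w = 0 := by
      intro w
      rw [← L_def, hz, wedgeL_zero_left, LinearEquiv.map_zero]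
    exact sub_eq_zero.mp (H_nondeg _ hH)
  -- surjectivity of L₁
  let M : V₁ →ₗ[E] V₁ :=
    { toFun := fun x => L₁ (L₁ x)
      map_add' := fun x y => by show L₁ (L₁ (x + y)) = L₁ (L₁ x) + L₁ (L₁ y); rw [L_add, L_add]
      map_smul' := fun a x => by show L₁ (L₁ (a • x)) = a • L₁ (L₁ x); rw [L_smul, L_smul, hρ_invol] }
  have M_inj : Function.Injective M := fun x y h => L_inj (L_inj h)
  have M_surj := LinearMap.injective_iff_surjective.mp M_inj
  have L_surj : ∀ z : V₁, ∃ t, L₁ t = z := by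
    intro z
    obtain ⟨x, hx⟩ := M_surj z
    exact ⟨L₁ x, hx⟩
  have Bnd : ∀ z : V₁, (∀ w, B z w = 0) → z = 0 := by
    intro z hz
    obtain ⟨t, ht⟩ := L_surj z
    have hH : ∀ w, H₁ t w = 0 := fun w => by rw [← BL, ht]; exact hz w
    rw [← ht, H_nondeg t hH, L0]
  have plk := pluecker' hV2 B Badd_l Badd_r Bsmul_l Bsmul_r Bself
  -- a pair of vectors on which B does not vanish
  have hex : ∃ w₁ w₂ : V₁, B w₁ w₂ ≠ 0 := by
    have hx0 : (Module.finBasisOfFinrankEq E V₁ hV2) 0 ≠ 0 :=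
      (Module.finBasisOfFinrankEq E V₁ hV2).ne_zero 0
    by_contra hcon
    push_neg at hcon
    apply hx0
    apply H_nondeg
    intro y
    rw [← BL]
    exact hcon _ _
  obtain ⟨w₁, w₂, hw⟩ := hex
  have G : ∀ u v, B (L₁ u) (L₁ v) = vol * ρ (B u v) := by
    intro u v
    have h := keyE u v w₁ w₂
    rw [← BL u w₁, ← BL v w₂, ← BL u w₂, ← BL v w₁] at h
    rw [plk (L₁ u) (L₁ v) w₁ w₂] at h
    have h2 := mul_right_cancel₀ hw h.symm
    rw [h2, mul_comm]
  -- the main identity L₁ ∘ L₁ = -vol • id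
  have main : ∀ x, L₁ (L₁ x) = -vol • x := by
    intro x
    have hz : ∀ w, B (L₁ (L₁ x) + vol • x) w = 0 := by
      intro w
      obtain ⟨t, ht⟩ := L_surj w
      subst ht
      have e1 : B (L₁ (L₁ x)) (L₁ t) = vol * ρ (H₁ x t) := by
        rw [G, BL]
      have e2 : B x (L₁ t) = - ρ (H₁ x t) := by
        rw [Bswap (L₁ t) x, BL, H_conj t x]
      rw [Badd_l, Bsmul_l, e1, e2]
      ring
    have hz0 := Bnd _ hz
    rw [neg_smul]
    exact eq_neg_of_add_eq_zero_left hz0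
  have hρvol : ρ vol = vol := (hv_conj ω ω).symm
  have hvol_ne : vol ≠ 0 := by
    intro h0
    have hx0 : (Module.finBasisOfFinrankEq E V₁ hV2) 0 ≠ 0 :=
      (Module.finBasisOfFinrankEq E V₁ hV2).ne_zero 0
    apply hx0
    have hm := main ((Module.finBasisOfFinrankEq E V₁ hV2) 0)
    rw [h0, neg_zero, zero_smul] at hm
    have h1 : L₁ (L₁ ((Module.finBasisOfFinrankEq E V₁ hV2) 0)) = L₁ 0 := by rw [hm, L0]
    have h2 : L₁ ((Module.finBasisOfFinrankEq E V₁ hV2) 0) = L₁ 0 := by rw [L_inj h1, L0]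
    exact L_inj h2
  refine ⟨?_, main, ?_, ?_⟩
  · obtain ⟨c, hc⟩ := hρ_fixed_field (-vol) (by rw [map_neg, hρvol])
    refine ⟨c, ?_, hc⟩
    intro h0
    rw [h0, map_zero] at hc
    exact hvol_ne (neg_eq_zero.mp hc.symm)
  · intro x y
    have e1 : H₁ (L₁ x) y = -vol * B x y := by
      rw [← BL, main x, Bsmul_l]
    have e2 : H₁ (L₁ y) x = -vol * B y x := by
      rw [← BL, main y, Bsmul_l]
    rw [e1, e2, Bswap x y]
    ring
  · intro x y
    have e1 : H₁ (L₁ x) (L₁ y) = -vol * - ρ (H₁ x y) := by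
      rw [← BL, main x, Bsmul_l, Bswap (L₁ y) x, BL, H_conj y x]
    rw [e1]
    rw [show -vol * - ρ (H₁ x y) = vol * ρ (H₁ x y) by ring]
    rw [map_mul, hρ_invol, hρvol]
    ring
end

section
/- Let Φ : E^× × E^× × F^× → F^× × F^× × E^× be defined by Φ(t₁, t₂, ν) = (N(t₁t₂), ν·N(t₁), ν·t₁·ρ(t₂)). Then Φ is a group homomorphism which maps the subgroup { (z, z, N(z)) : z ∈ E^× } into the diagonal subgroup { (t, t, t) : t ∈ F^× }, and the induced homomorphism (E^× × E^× × F^×)/{(z, z, N(z)) : z ∈ E^×} → (F^× × F^× × E^×)/{(t, t, t) : t ∈ F^×} is a group isomorphism. (This describes the effect of the exceptional isomorphism PGU_E(V) ≅ PGU_B(Ṽ)⁰ on a maximal torus in the split case.) -/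
/-- The subgroup `{(z, z, N(z)) : z ∈ E^×}` of `E^× × E^× × F^×`. -/
def normGraphSubgroup {F E : Type*} [Field F] [Field E] [Algebra F E]
    (N : Eˣ →* Fˣ) : Subgroup (Eˣ × Eˣ × Fˣ) where
  carrier := {x | ∃ z : Eˣ, x = (z, z, N z)}
  one_mem' := ⟨1, by simp; rfl⟩
  mul_mem' := by
    rintro x y ⟨z, rfl⟩ ⟨w, rfl⟩
    exact ⟨z * w, by simp [Prod.ext_iff]⟩
  inv_mem' := by
    rintro x ⟨z, rfl⟩
    exact ⟨z⁻¹, by simp [Prod.ext_iff]⟩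

/-- The diagonal subgroup `{(t, t, t) : t ∈ F^×}` of `F^× × F^× × E^×`. -/
def diagSubgroup (F E : Type*) [Field F] [Field E] [Algebra F E] :
    Subgroup (Fˣ × Fˣ × Eˣ) where
  carrier := {x | ∃ t : Fˣ, x = (t, t, Units.map (algebraMap F E).toMonoidHom t)}
  one_mem' := ⟨1, by simp; rfl⟩
  mul_mem' := by
    rintro x y ⟨z, rfl⟩ ⟨w, rfl⟩
    exact ⟨z * w, by simp [Prod.ext_iff]⟩
  inv_mem' := by
    rintro x ⟨z, rfl⟩
    exact ⟨z⁻¹, by simp [Prod.ext_iff]⟩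

/-! Modulo the diagonal, `(a, b, c)` is the image of `(1, ρ(c) / b, N(c) / (a b))`, because
`N ∘ ρ = N` and `ρ ∘ ρ = id`. Conversely, if `Φ(a, b, ν)` is diagonal then the first two
coordinates give `ν = N(b)`, and then `N(a) = a ρ(a)` turns the third into `ρ(b) = ρ(a)`, so
`b = a` since `ρ` is injective. -/

theorem QuotientGroup.map_bijective_of_comap_le {G H : Type*} [Group G] [Group H]
    {N : Subgroup G} [N.Normal] {M : Subgroup H} [M.Normal] {f : G →* H}
    (h : N ≤ M.comap f) (hker : M.comap f ≤ N)
    (hsurj : Function.Surjective (QuotientGroup.mk ∘ f : G → H ⧸ M)) :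
    Function.Bijective (QuotientGroup.map N M f h) := by
  refine ⟨?_, QuotientGroup.map_surjective_of_surjective N M f hsurj h⟩
  rw [← MonoidHom.ker_eq_bot_iff, QuotientGroup.ker_map, eq_bot_iff,
    ← QuotientGroup.map_mk'_self N]
  exact Subgroup.map_mono hker

section Torus

variable {F E : Type*} [Field F] [Field E] [Algebra F E] (ρ : E →+* E) (N : Eˣ →* Fˣ)

def splitTorusHom : (Eˣ × Eˣ × Fˣ) →* (Fˣ × Fˣ × Eˣ) where
  toFun x := (N (x.1 * x.2.1), x.2.2 * N x.1,
    Units.map (algebraMap F E).toMonoidHom x.2.2 * x.1 * Units.map ρ.toMonoidHom x.2.1)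
  map_one' := by simp
  map_mul' x y := by
    simp only [Prod.fst_mul, Prod.snd_mul, map_mul, Prod.mk_mul_mk, Prod.mk.injEq]
    refine ⟨?_, ?_, ?_⟩ <;> ac_rfl

theorem splitTorusHom_apply (t₁ t₂ : Eˣ) (ν : Fˣ) :
    splitTorusHom ρ N (t₁, t₂, ν) = (N (t₁ * t₂), ν * N t₁,
      Units.map (algebraMap F E).toMonoidHom ν * t₁ * Units.map ρ.toMonoidHom t₂) :=
  rfl

variable {ρ N}

theorem units_map_algebraMap_norm
    (hN : ∀ z : Eˣ, algebraMap F E (N z) = (z : E) * ρ (z : E)) (z : Eˣ) :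
    Units.map (algebraMap F E).toMonoidHom (N z) = z * Units.map ρ.toMonoidHom z :=
  Units.ext (hN z)

theorem norm_units_map_ringHom (hρ_invol : ∀ a, ρ (ρ a) = a)
    (hN : ∀ z : Eˣ, algebraMap F E (N z) = (z : E) * ρ (z : E)) (c : Eˣ) :
    N (Units.map ρ.toMonoidHom c) = N c :=
  Units.ext <| (algebraMap F E).injective <| by simp [hN, hρ_invol, mul_comm]

theorem norm_units_map_algebraMap (hρ_fixF : ∀ c : F, ρ (algebraMap F E c) = algebraMap F E c)
    (hN : ∀ z : Eˣ, algebraMap F E (N z) = (z : E) * ρ (z : E)) (b : Fˣ) :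
    N (Units.map (algebraMap F E).toMonoidHom b) = b * b :=
  Units.ext <| (algebraMap F E).injective <| by simp [hN, hρ_fixF]

theorem normGraphSubgroup_le_comap_splitTorusHom
    (hN : ∀ z : Eˣ, algebraMap F E (N z) = (z : E) * ρ (z : E)) :
    normGraphSubgroup N ≤ (diagSubgroup F E).comap (splitTorusHom ρ N) := by
  rintro _ ⟨z, rfl⟩
  refine ⟨N z * N z, ?_⟩
  rw [splitTorusHom_apply, map_mul, map_mul, units_map_algebraMap_norm hN]
  refine Prod.ext rfl (Prod.ext rfl ?_)
  ac_rfl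

theorem comap_splitTorusHom_le_normGraphSubgroup
    (hN : ∀ z : Eˣ, algebraMap F E (N z) = (z : E) * ρ (z : E)) :
    (diagSubgroup F E).comap (splitTorusHom ρ N) ≤ normGraphSubgroup N := by
  rintro ⟨a, b, ν⟩ ⟨t, ht⟩
  simp only [splitTorusHom_apply, Prod.mk.injEq] at ht
  obtain ⟨h₁, h₂, h₃⟩ := ht
  have hν : ν = N b := mul_right_cancel (b := N a) (by rw [h₂, ← h₁, map_mul, mul_comm])
  have hab : b = a := by
    rw [← h₂, map_mul, units_map_algebraMap_norm hN, mul_assoc] at h₃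
    exact Units.map_injective ρ.injective (mul_left_cancel (mul_left_cancel h₃))
  exact ⟨a, by rw [hν, hab]⟩

theorem surjective_mk_comp_splitTorusHom (hρ_invol : ∀ a, ρ (ρ a) = a)
    (hρ_fixF : ∀ c : F, ρ (algebraMap F E c) = algebraMap F E c)
    (hN : ∀ z : Eˣ, algebraMap F E (N z) = (z : E) * ρ (z : E)) :
    Function.Surjective
      (QuotientGroup.mk ∘ splitTorusHom ρ N : _ → (Fˣ × Fˣ × Eˣ) ⧸ diagSubgroup F E) := by
  intro y
  obtain ⟨⟨a, b, c⟩, rfl⟩ := QuotientGroup.mk_surjective y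
  refine ⟨(1, Units.map ρ.toMonoidHom c * (Units.map (algebraMap F E).toMonoidHom b)⁻¹,
    N c * a⁻¹ * b⁻¹), QuotientGroup.eq.mpr ⟨a * b * b * (N c)⁻¹, ?_⟩⟩
  have hρρ : Units.map ρ.toMonoidHom (Units.map ρ.toMonoidHom c) = c := Units.ext (hρ_invol c)
  have hρι : Units.map ρ.toMonoidHom (Units.map (algebraMap F E).toMonoidHom b) =
      Units.map (algebraMap F E).toMonoidHom b := Units.ext (hρ_fixF b)
  simp only [splitTorusHom_apply, one_mul, map_mul, map_inv, map_one, mul_one, hρρ, hρι,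
    norm_units_map_ringHom hρ_invol hN, norm_units_map_algebraMap hρ_fixF hN, Prod.inv_mk,
    Prod.mk_mul_mk, Prod.mk.injEq]
  refine ⟨?_, ?_, ?_⟩ <;> ext <;>
    simp only [mul_inv_rev, inv_inv, Units.val_mul, Units.val_inv_eq_inv_val, Units.coe_map] <;>
    field_simp

end Torus

theorem torus_isomorphism_split_case_general
    {F E : Type*} [Field F] [Field E] [Algebra F E]
    (ρ : E →+* E) (hρ_invol : ∀ a, ρ (ρ a) = a)
    (hρ_fixF : ∀ c : F, ρ (algebraMap F E c) = algebraMap F E c)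
    (N : Eˣ →* Fˣ) (hN : ∀ z : Eˣ, algebraMap F E (N z) = (z : E) * ρ (z : E)) :
    ∃ Φ : (Eˣ × Eˣ × Fˣ) →* (Fˣ × Fˣ × Eˣ),
      (∀ (t₁ t₂ : Eˣ) (ν : Fˣ),
        (Φ (t₁, t₂, ν)).1 = N (t₁ * t₂) ∧
        (Φ (t₁, t₂, ν)).2.1 = ν * N t₁ ∧
        ((Φ (t₁, t₂, ν)).2.2 : E) = algebraMap F E ν * (t₁ : E) * ρ (t₂ : E)) ∧
      ∃ hle : normGraphSubgroup N ≤ Subgroup.comap Φ (diagSubgroup F E),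
        Function.Bijective
          (QuotientGroup.map (normGraphSubgroup N) (diagSubgroup F E) Φ hle) :=
  ⟨splitTorusHom ρ N, fun _ _ _ => ⟨rfl, rfl, rfl⟩,
    normGraphSubgroup_le_comap_splitTorusHom hN,
    QuotientGroup.map_bijective_of_comap_le _ (comap_splitTorusHom_le_normGraphSubgroup hN)
      (surjective_mk_comp_splitTorusHom hρ_invol hρ_fixF hN)⟩

/-- The map `Φ(t₁, t₂, ν) = (N(t₁t₂), ν·N(t₁), ν·t₁·ρ(t₂))` is a group
homomorphism `E^× × E^× × F^× → F^× × F^× × E^×` carrying `{(z,z,N(z))}` into the diagonal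
`{(t,t,t)}`, and the induced map on quotients is a group isomorphism.  (This is the effect of
the exceptional isomorphism `PGU_E(V) ≅ PGU_B(Ṽ)⁰` on a maximal torus in the split case.) -/
theorem torus_isomorphism_split_case
    {F E : Type*} [Field F] [CharZero F] [Field E] [Algebra F E]
    (hquad : Module.finrank F E = 2)
    (ρ : E →+* E) (hρ_invol : ∀ a, ρ (ρ a) = a) (hρ_ne : ρ ≠ RingHom.id E)
    (hρ_fixF : ∀ c : F, ρ (algebraMap F E c) = algebraMap F E c)
    (hρ_fixed_field : ∀ a : E, ρ a = a → ∃ c : F, algebraMap F E c = a)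
    (N : Eˣ →* Fˣ) (hN : ∀ z : Eˣ, algebraMap F E (N z) = (z : E) * ρ (z : E)) :
    ∃ Φ : (Eˣ × Eˣ × Fˣ) →* (Fˣ × Fˣ × Eˣ),
      (∀ (t₁ t₂ : Eˣ) (ν : Fˣ),
        (Φ (t₁, t₂, ν)).1 = N (t₁ * t₂) ∧
        (Φ (t₁, t₂, ν)).2.1 = ν * N t₁ ∧
        ((Φ (t₁, t₂, ν)).2.2 : E) = algebraMap F E ν * (t₁ : E) * ρ (t₂ : E)) ∧
      ∃ hle : normGraphSubgroup N ≤ Subgroup.comap Φ (diagSubgroup F E),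
        Function.Bijective
          (QuotientGroup.map (normGraphSubgroup N) (diagSubgroup F E) Φ hle) :=
  torus_isomorphism_split_case_general ρ hρ_invol hρ_fixF N hN
end

section
/- For (z₁, z₂, z₃, z₄, r) ∈ T, choose y_j ∈ ℂ¹ with y_j² = z_j and set Ψ(z₁, z₂, z₃, z₄, r) := (y₁y₃/(y₂y₄), y₁y₄/(y₂y₃), y₁y₂/(y₃y₄), r²) ∈ T̃. Then the class of Ψ(z₁, z₂, z₃, z₄, r) in T̃/Z̃ is independent of the choice of the square roots y_j; the induced map T → T̃/Z̃ is a group homomorphism with kernel Z; and it induces a group isomorphism T/Z ≅ T̃/Z̃. (This describes the effect of the real exceptional isomorphism U(2,2)/center ≅ SO(4,2)/center on maximal tori.) -/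
/-- The map `T → T̃`, `((z₁,z₂,z₃,z₄), r) ↦ (y₁y₃/(y₂y₄), y₁y₄/(y₂y₃), y₁y₂/(y₃y₄), r²)`
computed from a choice of square roots `y_j² = z_j`. -/
noncomputable def PsiMap (y : Fin 4 → ℂ) (r : ℝ) : ℂ × ℂ × ℂ × ℝ :=
  (y 0 * y 2 / (y 1 * y 3), y 0 * y 3 / (y 1 * y 2), y 0 * y 1 / (y 2 * y 3), r ^ 2)

/-!
Ψ is multiplicative in `(y, r)`, so the square roots matter only through a sign vector
`ε ∈ {±1}⁴`, which changes every complex coordinate of Ψ by the same sign `ε₁ε₂ε₃ε₄ ∈ Z̃`.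
The products of two complex coordinates of Ψ are `z₁/z₂`, `z₁/z₄` and `z₁/z₃`, while a triple
`(u, v, w)` is a constant sign exactly when its pairwise products are `1`; this identifies the
kernel with `Z`. Surjectivity is an explicit solve for `y` with `y₁ = 1`.
-/

theorem exists_sign_eq_iff_mul_eq_one {R : Type*} [CommRing R] [NoZeroDivisors R] {u v w : R} :
    (∃ ε : R, (ε = 1 ∨ ε = -1) ∧ u = ε ∧ v = ε ∧ w = ε) ↔
      u * v = 1 ∧ u * w = 1 ∧ v * w = 1 := by
  constructor
  · rintro ⟨ε, hε, hu, hv, hw⟩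
    have hεε : ε * ε = 1 := mul_self_eq_one_iff.mpr hε
    rw [hu, hv, hw]
    exact ⟨hεε, hεε, hεε⟩
  · rintro ⟨huv, huw, hvw⟩
    have hu : u = w := by linear_combination (-u) * hvw + w * huv
    have hv : v = w := by linear_combination (-v) * huw + w * huv
    refine ⟨w, mul_self_eq_one_iff.mp ?_, hu, hv, rfl⟩
    rwa [hv] at hvw

theorem norm_eq_one_of_norm_sq_eq_one {𝕜 : Type*} [NormedDivisionRing 𝕜] {x : 𝕜}
    (h : ‖x ^ 2‖ = 1) : ‖x‖ = 1 := by
  rwa [norm_pow, pow_eq_one_iff_of_nonneg (norm_nonneg x) two_ne_zero] at h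

theorem exists_sq_eq_of_norm_eq_one {w : ℂ} (hw : ‖w‖ = 1) : ∃ a : ℂ, a ^ 2 = w ∧ ‖a‖ = 1 := by
  obtain ⟨a, ha⟩ := IsAlgClosed.exists_pow_nat_eq w two_pos
  exact ⟨a, ha, norm_eq_one_of_norm_sq_eq_one (ha ▸ hw)⟩

namespace PsiMap

theorem mul (y y' : Fin 4 → ℂ) (r r' : ℝ) :
    PsiMap (y * y') (r * r') = PsiMap y r * PsiMap y' r' := by
  simp only [PsiMap, Pi.mul_apply, Prod.mk_mul_mk, mul_pow]
  refine Prod.ext ?_ (Prod.ext ?_ (Prod.ext ?_ rfl)) <;>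
    simp only [mul_mul_mul_comm, mul_div_mul_comm]

theorem norm_eq_one {y : Fin 4 → ℂ} (hy : ∀ j, ‖y j‖ = 1) (r : ℝ) :
    ‖(PsiMap y r).1‖ = 1 ∧ ‖(PsiMap y r).2.1‖ = 1 ∧ ‖(PsiMap y r).2.2.1‖ = 1 := by
  simp [PsiMap, hy]

theorem of_sq_eq_one {ε : Fin 4 → ℂ} (hε : ∀ j, ε j ^ 2 = 1) :
    PsiMap ε 1 = (∏ j, ε j, ∏ j, ε j, ∏ j, ε j, 1) := by
  have hinv : ∀ j, (ε j)⁻¹ = ε j := fun j => inv_eq_of_mul_eq_one_right (by rw [← sq, hε j])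
  simp only [PsiMap, Fin.prod_univ_four, div_eq_mul_inv, mul_inv, hinv, one_pow, Prod.mk.injEq,
    and_true]
  refine ⟨?_, ?_, ?_⟩ <;> ring

theorem eq_sign_mul_of_sq_eq_sq {y y' : Fin 4 → ℂ} (hy : ∀ j, y j ≠ 0)
    (hsq : ∀ j, y' j ^ 2 = y j ^ 2) (r : ℝ) :
    ∃ ε : ℂ, (ε = 1 ∨ ε = -1) ∧ PsiMap y' r = (ε, ε, ε, 1) * PsiMap y r := by
  set ε : Fin 4 → ℂ := fun j => y' j / y j
  have hεsq : ∀ j, ε j ^ 2 = 1 := fun j => by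
    rw [div_pow, hsq j, div_self (pow_ne_zero 2 (hy j))]
  have hy' : y' = ε * y := funext fun j => (div_mul_cancel₀ (y' j) (hy j)).symm
  refine ⟨∏ j, ε j, sq_eq_one_iff.mp ?_, ?_⟩
  · rw [← Finset.prod_pow, Finset.prod_eq_one fun j _ => hεsq j]
  · rw [hy', ← of_sq_eq_one hεsq, ← mul, one_mul]

theorem fst_mul_snd_fst {y : Fin 4 → ℂ} (h2 : y 2 ≠ 0) (h3 : y 3 ≠ 0) (r : ℝ) :
    (PsiMap y r).1 * (PsiMap y r).2.1 = y 0 ^ 2 / y 1 ^ 2 := by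
  simp only [PsiMap]
  field_simp

theorem fst_mul_snd_snd_fst {y : Fin 4 → ℂ} (h1 : y 1 ≠ 0) (h2 : y 2 ≠ 0) (r : ℝ) :
    (PsiMap y r).1 * (PsiMap y r).2.2.1 = y 0 ^ 2 / y 3 ^ 2 := by
  simp only [PsiMap]
  field_simp

theorem snd_fst_mul_snd_snd_fst {y : Fin 4 → ℂ} (h1 : y 1 ≠ 0) (h3 : y 3 ≠ 0) (r : ℝ) :
    (PsiMap y r).2.1 * (PsiMap y r).2.2.1 = y 0 ^ 2 / y 2 ^ 2 := by
  simp only [PsiMap]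
  field_simp

theorem exists_sign_eq_iff_sq_eq {y : Fin 4 → ℂ} (hy : ∀ j, y j ≠ 0) (r : ℝ) :
    (∃ ε : ℂ, (ε = 1 ∨ ε = -1) ∧
        (PsiMap y r).1 = ε ∧ (PsiMap y r).2.1 = ε ∧ (PsiMap y r).2.2.1 = ε) ↔
      y 0 ^ 2 = y 1 ^ 2 ∧ y 1 ^ 2 = y 2 ^ 2 ∧ y 2 ^ 2 = y 3 ^ 2 := by
  have hsq : ∀ j, y j ^ 2 ≠ 0 := fun j => pow_ne_zero 2 (hy j)
  rw [exists_sign_eq_iff_mul_eq_one, fst_mul_snd_fst (hy 2) (hy 3), fst_mul_snd_snd_fst (hy 1) (hy 2),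
    snd_fst_mul_snd_snd_fst (hy 1) (hy 3), div_eq_one_iff_eq (hsq 1), div_eq_one_iff_eq (hsq 3),
    div_eq_one_iff_eq (hsq 2)]
  constructor
  · rintro ⟨h01, h03, h02⟩
    exact ⟨h01, h01 ▸ h02, h02 ▸ h03⟩
  · rintro ⟨h01, h12, h23⟩
    exact ⟨h01, h01.trans (h12.trans h23), h01.trans h12⟩

/-- For `y = (1, a, b, w₂ab)` one computes `Ψ y = ((w₂a²)⁻¹, w₂, (w₂b²)⁻¹)`. -/
theorem exists_eq_of_norm_eq_one {w₁ w₂ w₃ : ℂ} (h₁ : ‖w₁‖ = 1) (h₂ : ‖w₂‖ = 1) (h₃ : ‖w₃‖ = 1) :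
    ∃ y : Fin 4 → ℂ, (∀ j, ‖y j‖ = 1) ∧ PsiMap y 1 = (w₁, w₂, w₃, 1) := by
  have hw₁ : w₁ ≠ 0 := ne_zero_of_norm_ne_zero (h₁ ▸ one_ne_zero)
  have hw₂ : w₂ ≠ 0 := ne_zero_of_norm_ne_zero (h₂ ▸ one_ne_zero)
  have hw₃ : w₃ ≠ 0 := ne_zero_of_norm_ne_zero (h₃ ▸ one_ne_zero)
  obtain ⟨a, ha, ha₁⟩ := exists_sq_eq_of_norm_eq_one (w := (w₁ * w₂)⁻¹) (by simp [h₁, h₂])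
  obtain ⟨b, hb, hb₁⟩ := exists_sq_eq_of_norm_eq_one (w := (w₂ * w₃)⁻¹) (by simp [h₂, h₃])
  have ha₀ : a ≠ 0 := ne_zero_of_norm_ne_zero (ha₁ ▸ one_ne_zero)
  have hb₀ : b ≠ 0 := ne_zero_of_norm_ne_zero (hb₁ ▸ one_ne_zero)
  refine ⟨![1, a, b, w₂ * a * b], ?_, ?_⟩
  · intro j
    fin_cases j <;> simp [ha₁, hb₁, h₂]
  · simp only [PsiMap, Matrix.cons_val, one_pow, Prod.mk.injEq, and_true]
    refine ⟨?_, ?_, ?_⟩ <;> field_simp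
    · rw [ha]; field_simp
    · rw [hb]; field_simp

end PsiMap

/-- With `T = (ℂ¹)⁴ × ℝ₊`, `Z = {(z,z,z,z,r)}`, `T̃ = (ℂ¹)³ × ℝ₊` and
`Z̃ = {(±1,±1,±1,r)}`, the recipe `Ψ(z₁,z₂,z₃,z₄,r) = (y₁y₃/(y₂y₄), y₁y₄/(y₂y₃),
y₁y₂/(y₃y₄), r²)` (for any square roots `y_j² = z_j`) is independent of the choices modulo
`Z̃`, defines a group homomorphism `T → T̃/Z̃` with kernel `Z`, and induces a group isomorphism
`T/Z ≅ T̃/Z̃`.  (Effect of `U(2,2)/center ≅ SO(4,2)/center` on maximal tori.) -/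
theorem real_torus_isomorphism :
    -- values land in T̃, and the class modulo Z̃ is independent of the choice of square roots
    (∀ (z : Fin 4 → ℂ) (r : ℝ), (∀ j, ‖z j‖ = 1) → 0 < r →
      ∀ y y' : Fin 4 → ℂ, (∀ j, y j ^ 2 = z j) → (∀ j, y' j ^ 2 = z j) →
        (‖(PsiMap y r).1‖ = 1 ∧ ‖(PsiMap y r).2.1‖ = 1 ∧
          ‖(PsiMap y r).2.2.1‖ = 1 ∧ 0 < (PsiMap y r).2.2.2) ∧
        (∃ ε : ℂ, (ε = 1 ∨ ε = -1) ∧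
          (PsiMap y' r).1 = ε * (PsiMap y r).1 ∧
          (PsiMap y' r).2.1 = ε * (PsiMap y r).2.1 ∧
          (PsiMap y' r).2.2.1 = ε * (PsiMap y r).2.2.1 ∧
          (PsiMap y' r).2.2.2 = (PsiMap y r).2.2.2)) ∧
    -- the induced map T → T̃/Z̃ is a group homomorphism
    (∀ (y y' : Fin 4 → ℂ) (r r' : ℝ),
      PsiMap (fun j => y j * y' j) (r * r') =
        ((PsiMap y r).1 * (PsiMap y' r').1, (PsiMap y r).2.1 * (PsiMap y' r').2.1,
          (PsiMap y r).2.2.1 * (PsiMap y' r').2.2.1,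
          (PsiMap y r).2.2.2 * (PsiMap y' r').2.2.2)) ∧
    -- its kernel is Z = {(z,z,z,z,r)}
    (∀ (z : Fin 4 → ℂ) (r : ℝ), (∀ j, ‖z j‖ = 1) → 0 < r →
      ∀ y : Fin 4 → ℂ, (∀ j, y j ^ 2 = z j) →
        ((∃ ε : ℂ, (ε = 1 ∨ ε = -1) ∧ ∃ s : ℝ, 0 < s ∧
            (PsiMap y r).1 = ε ∧ (PsiMap y r).2.1 = ε ∧ (PsiMap y r).2.2.1 = ε ∧
            (PsiMap y r).2.2.2 = s) ↔
          (z 0 = z 1 ∧ z 1 = z 2 ∧ z 2 = z 3))) ∧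
    -- the induced map T/Z → T̃/Z̃ is surjective (hence an isomorphism)
    (∀ (w₁ w₂ w₃ : ℂ) (s : ℝ), ‖w₁‖ = 1 → ‖w₂‖ = 1 →
      ‖w₃‖ = 1 → 0 < s →
      ∃ (z : Fin 4 → ℂ) (r : ℝ) (y : Fin 4 → ℂ),
        (∀ j, ‖z j‖ = 1) ∧ 0 < r ∧ (∀ j, y j ^ 2 = z j) ∧
        ∃ ε : ℂ, (ε = 1 ∨ ε = -1) ∧ ∃ t : ℝ, 0 < t ∧
          (PsiMap y r).1 = ε * w₁ ∧ (PsiMap y r).2.1 = ε * w₂ ∧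
          (PsiMap y r).2.2.1 = ε * w₃ ∧ (PsiMap y r).2.2.2 = t * s) := by
  have norm_root {z y : Fin 4 → ℂ} (hz : ∀ j, ‖z j‖ = 1) (hy : ∀ j, y j ^ 2 = z j) (j : Fin 4) :
      ‖y j‖ = 1 :=
    norm_eq_one_of_norm_sq_eq_one (by rw [hy j, hz j])
  have root_ne_zero {z y : Fin 4 → ℂ} (hz : ∀ j, ‖z j‖ = 1) (hy : ∀ j, y j ^ 2 = z j)
      (j : Fin 4) : y j ≠ 0 :=
    ne_zero_of_norm_ne_zero (norm_root hz hy j ▸ one_ne_zero)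
  refine ⟨fun z r hz hr y y' hy hy' => ⟨?_, ?_⟩, PsiMap.mul, fun z r hz hr y hy => ?_, ?_⟩
  · obtain ⟨h₁, h₂, h₃⟩ := PsiMap.norm_eq_one (norm_root hz hy) r
    exact ⟨h₁, h₂, h₃, pow_pos hr 2⟩
  · obtain ⟨ε, hε, h⟩ := PsiMap.eq_sign_mul_of_sq_eq_sq (root_ne_zero hz hy)
      (fun j => (hy' j).trans (hy j).symm) r
    simp only [Prod.ext_iff, Prod.fst_mul, Prod.snd_mul, one_mul] at h
    exact ⟨ε, hε, h⟩
  · have hker := PsiMap.exists_sign_eq_iff_sq_eq (root_ne_zero hz hy) r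
    simp only [hy] at hker
    rw [← hker]
    exact ⟨fun ⟨ε, hε, _, _, h⟩ => ⟨ε, hε, h.1, h.2.1, h.2.2.1⟩,
      fun ⟨ε, hε, h⟩ => ⟨ε, hε, r ^ 2, pow_pos hr 2, h.1, h.2.1, h.2.2, rfl⟩⟩
  · intro w₁ w₂ w₃ s h₁ h₂ h₃ hs
    obtain ⟨y, hy, hψ⟩ := PsiMap.exists_eq_of_norm_eq_one h₁ h₂ h₃
    refine ⟨fun j => y j ^ 2, 1, y, fun j => by simp [hy j], one_pos, fun _ => rfl,
      1, Or.inl rfl, s⁻¹, inv_pos.2 hs, ?_⟩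
    simp only [hψ, one_mul, inv_mul_cancel₀ hs.ne', and_self]
end

section
/- In the polynomial ring ℂ[z₁, z₂, z₃, z₄] one has the identity ∑_{α = (α₁,α₂) ∈ {1,2,3,4}²} ∑_{β ∈ {1,2,3,4}^ℓ} z_{α₁} z_{α₂} · z_{β₁}⋯z_{β_ℓ} · ( pr_P(ω_{α₁ 5}) ∧ pr_P(ω_{α₂ 6}) ∧ ω^ε ) · ⟨ pr(e_{β₁})⋯pr(e_{β_ℓ}), v^ε ⟩ = (z₁ + εi·z₂)^{ℓ+2}. (This is the Fock-model identity establishing that the contraction of the restricted Kudla–Millson Schwartz form φ'_{2,ℓ} against ω^ε and v^ε equals (1/4πi)^{ℓ+2}(x₁+εix₂)^{ℓ+2} times the Gaussian.) -/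
/-- The basis `ω_{a5}, ω_{a6}` (`1 ≤ a ≤ 4`) of the 8-dimensional space `Ω`; the second index
`s ∈ Fin 2` records `5` or `6`. -/
noncomputable def ωVec (a : Fin 4) (s : Fin 2) : Fin 4 × Fin 2 → ℂ := Pi.single (a, s) 1

/-- The basis `ω_{a5}, ω_{a6}` (`a ∈ {1,2}`) of the subspace `P`. -/
noncomputable def κVec (a : Fin 2) (s : Fin 2) : Fin 2 × Fin 2 → ℂ := Pi.single (a, s) 1

/-- The projection `pr_P : Ω → P` killing `ω_{a5}, ω_{a6}` for `a ∈ {3,4}`. -/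
noncomputable def prP : (Fin 4 × Fin 2 → ℂ) →ₗ[ℂ] (Fin 2 × Fin 2 → ℂ) :=
  LinearMap.funLeft ℂ ℂ (fun p => (Fin.castLE (by norm_num) p.1, p.2))

/-- The basis `e₁, …, e₄` of the 4-dimensional space `U`. -/
noncomputable def eU (a : Fin 4) : Fin 4 → ℂ := Pi.single a 1

/-- The projection `U → span(e₁,e₂)` killing `e₃, e₄`. -/
noncomputable def prS : (Fin 4 → ℂ) →ₗ[ℂ] (Fin 2 → ℂ) :=
  LinearMap.funLeft ℂ ℂ (Fin.castLE (by norm_num))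

/-- The symmetric bilinear form with `⟨e_a, e_b⟩ = δ_{ab}` on `span(e₁,e₂)`. -/
def BS (u v : Fin 2 → ℂ) : ℂ := u 0 * v 0 + u 1 * v 1

/-- The basis vector `e₁ + εi·e₂` of `span(e₁,e₂)`. -/
noncomputable def wVec (ε : ℂ) : Fin 2 → ℂ :=
  (Pi.single 0 1 : Fin 2 → ℂ) + (ε * Complex.I) • (Pi.single 1 1 : Fin 2 → ℂ)

/-! A linear form on `⋀⁴P` is a multiple of the determinant in the basis `ω₁₅, ω₂₅, ω₁₆, ω₂₆`,
normalised to `1` there. Since `pr_P(ω_{a5})`, `pr_P(ω_{a6})` vanish for `a ≥ 3`, the wedge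
coefficient of `α` factors as `c_{α₁} c'_{α₂}` with `c = (-εi, 1, 0, 0)`, `c' = (εi, -1, 0, 0)`.
Every term of the symmetrised pairing with the pure power `v^ε` equals `∏ⱼ ⟨pr(e_{βⱼ}), e₁ + εi·e₂⟩`,
so the whole sum is `(z₂ - εi z₁)(εi z₁ - z₂)(z₁ + εi z₂)^ℓ`, and `(εi)² = -1` turns the first two
factors into `(z₁ + εi z₂)²`. -/

open MvPolynomial

theorem map_wedgeι_eq_mul_det {R M : Type*} [CommRing R] [AddCommGroup M] [Module R M] {n : ℕ}
    (d : ⋀[R]^n M →ₗ[R] R) (b : Module.Basis (Fin n) R M) (v : Fin n → M) :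
    d (wedgeι R n v) = d (wedgeι R n b) * b.det v :=
  congr($((d.compAlternatingMap (exteriorPower.ιMulti R n)).eq_smul_basis_det b) v)

theorem inv_factorial_mul_sum_perm_prod_const {K V : Type*} [Field K] [CharZero K] {ℓ : ℕ}
    (B : V → V → K) (u : Fin ℓ → V) (w : V) :
    (ℓ.factorial : K)⁻¹ * ∑ σ : Equiv.Perm (Fin ℓ), ∏ j, B (u j) ((fun _ : Fin ℓ => w) (σ j)) =
      ∏ j, B (u j) w := by
  rw [Finset.sum_const, Finset.card_univ, Fintype.card_perm, Fintype.card_fin, nsmul_eq_mul,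
    inv_mul_cancel_left₀ (Nat.cast_ne_zero.2 ℓ.factorial_ne_zero)]

theorem det_block_fin_four {R : Type*} [CommRing R] (p q r s t : R) :
    !![p, 0, 1, 0; q, 0, t, 0; 0, r, 0, 1; 0, s, 0, t].det = (q - p * t) * (r * t - s) := by
  simp [Matrix.det_succ_row_zero, Fin.sum_univ_succ, Fin.succAbove]
  ring

theorem sum_X_mul_C_vecCons {R : Type*} [CommSemiring R] (p q : R) :
    ∑ a : Fin 4, X a * C (![p, q, 0, 0] a) = C p * X 0 + C q * X 1 := by
  simp [Fin.sum_univ_four, mul_comm]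

noncomputable def κBasis : Module.Basis (Fin 4) ℂ (Fin 2 × Fin 2 → ℂ) :=
  (Pi.basisFun ℂ (Fin 2 × Fin 2)).reindex
    (Equiv.ofBijective ![(0, 0), (1, 0), (0, 1), (1, 1)] (by decide)).symm

theorem coe_κBasis : ⇑κBasis = ![κVec 0 0, κVec 1 0, κVec 0 1, κVec 1 1] := by
  funext i
  fin_cases i <;> simp [κBasis, κVec, Equiv.ofBijective]

theorem κBasis_toMatrix (v₀ v₁ v₂ v₃ : Fin 2 × Fin 2 → ℂ) :
    κBasis.toMatrix ![v₀, v₁, v₂, v₃] =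
      !![v₀ (0, 0), v₁ (0, 0), v₂ (0, 0), v₃ (0, 0);
         v₀ (1, 0), v₁ (1, 0), v₂ (1, 0), v₃ (1, 0);
         v₀ (0, 1), v₁ (0, 1), v₂ (0, 1), v₃ (0, 1);
         v₀ (1, 1), v₁ (1, 1), v₂ (1, 1), v₃ (1, 1)] := by
  ext i j
  fin_cases i <;> fin_cases j <;> rfl

theorem prP_ωVec (a : Fin 4) (s : Fin 2) : prP (ωVec a s) = ![κVec 0 s, κVec 1 s, 0, 0] a := by
  funext ⟨x, y⟩
  fin_cases a <;> fin_cases x <;> simp [prP, ωVec, κVec, Pi.single_apply]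

theorem κBasis_det_prP_ωVec (t : ℂ) (a b : Fin 4) :
    κBasis.det ![prP (ωVec a 0), prP (ωVec b 1), κVec 0 0 + t • κVec 1 0,
      κVec 0 1 + t • κVec 1 1] = ![-t, 1, 0, 0] a * ![t, -1, 0, 0] b := by
  rw [Module.Basis.det_apply, κBasis_toMatrix]
  fin_cases a <;> fin_cases b <;>
  · norm_num [prP_ωVec, κVec]
    rw [det_block_fin_four]
    ring

theorem BS_prS_eU_wVec (ε : ℂ) (a : Fin 4) :
    BS (prS (eU a)) (wVec ε) = ![1, ε * Complex.I, 0, 0] a := by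
  fin_cases a <;> simp [BS, prS, eU, wVec]

/-- The Fock-model identity: in `ℂ[z₁,…,z₄]`,
`∑_α ∑_β z_{α₁} z_{α₂} z_β · (pr_P(ω_{α₁5}) ∧ pr_P(ω_{α₂6}) ∧ ω^ε) · ⟨pr(e_{β₁})⋯pr(e_{β_ℓ}), v^ε⟩
 = (z₁ + εi·z₂)^{ℓ+2}`, where `⋀⁴P` is identified with `ℂ` via
`ω₁₅∧ω₂₅∧ω₁₆∧ω₂₆ ↦ 1`, `ω^ε = (ω₁₅+εi·ω₂₅)∧(ω₁₆+εi·ω₂₆)`, and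
`v^ε = (1/ℓ!)·(e₁+εi·e₂)^ℓ`. -/
theorem fock_model_contraction (ℓ : ℕ) (ε : ℂ) (hε : ε = 1 ∨ ε = -1)
    (d : ↥(⋀[ℂ]^4 (Fin 2 × Fin 2 → ℂ)) →ₗ[ℂ] ℂ)
    (hd : d (wedgeι ℂ 4 ![κVec 0 0, κVec 1 0, κVec 0 1, κVec 1 1]) = 1) :
    ∑ α : Fin 4 × Fin 4, ∑ β : Fin ℓ → Fin 4,
      (MvPolynomial.X α.1 * MvPolynomial.X α.2 * ∏ j, MvPolynomial.X (β j)) *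
        MvPolynomial.C
          (d (wedgeι ℂ 4 ![prP (ωVec α.1 0), prP (ωVec α.2 1),
              κVec 0 0 + (ε * Complex.I) • κVec 1 0,
              κVec 0 1 + (ε * Complex.I) • κVec 1 1]) *
            ((ℓ.factorial : ℂ)⁻¹ *
              ∑ σ : Equiv.Perm (Fin ℓ), ∏ j,
                BS (prS (eU (β j))) ((fun _ : Fin ℓ => wVec ε) (σ j)))) =
      (MvPolynomial.X 0 + MvPolynomial.C (ε * Complex.I) * MvPolynomial.X 1) ^ (ℓ + 2) := by
  simp only [inv_factorial_mul_sum_perm_prod_const]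
  set t := ε * Complex.I
  have ht : C t ^ 2 = (-1 : MvPolynomial (Fin 4) ℂ) := by
    rcases hε with rfl | rfl <;> simp [t, ← map_pow]
  have hdet : ∀ v, d (wedgeι ℂ 4 v) = κBasis.det v := fun v => by
    rw [map_wedgeι_eq_mul_det d κBasis, coe_κBasis, hd, one_mul]
  simp only [hdet, κBasis_det_prP_ωVec, BS_prS_eU_wVec]
  set x : MvPolynomial (Fin 4) ℂ := X 0 + C t * X 1
  calc _ = ∑ a : Fin 4, ∑ b : Fin 4, ∑ β : Fin ℓ → Fin 4, X a * C (![-t, 1, 0, 0] a) *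
          (X b * C (![t, -1, 0, 0] b)) * ∏ j, X (β j) * C (![1, t, 0, 0] (β j)) := by
        rw [Fintype.sum_prod_type]
        refine Fintype.sum_congr _ _ fun a => Fintype.sum_congr _ _ fun b =>
          Fintype.sum_congr _ _ fun β => ?_
        simp only [map_mul, map_prod, Finset.prod_mul_distrib]
        ring
    _ = (∑ a : Fin 4, X a * C (![-t, 1, 0, 0] a)) * (∑ b : Fin 4, X b * C (![t, -1, 0, 0] b)) *
          (∑ a : Fin 4, X a * C (![1, t, 0, 0] a)) ^ ℓ := by
        rw [Fintype.sum_pow, Fintype.sum_mul_sum]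
        simp only [Finset.sum_mul]
        simp only [Finset.mul_sum]
    _ = (-C t * x) * (C t * x) * x ^ ℓ := by
        simp only [sum_X_mul_C_vecCons, map_one, map_neg, one_mul]
        congr 2
        · linear_combination X 1 * ht
        · linear_combination -X 1 * ht
    _ = x ^ (ℓ + 2) := by linear_combination -x ^ (ℓ + 2) * ht
end
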